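/- arXiv:2504.05687 — 11 statements merged into one kernel-verified Lean document; each statement's English description precedes it below -/
import Mathlib

section
/- Let n, d ≥ 1, let A ∈ ℝ^{n×d} have rows a_1, …, a_n ∈ ℝ^d which span ℝ^d and are all nonzero, let s ∈ ℝ^n have all entries positive with S := diag(s), let c ∈ ℝ^n have all entries positive, and let ε > 0. If exp(−ε)·c_i ≤ s_i²·a_iᵀ(AᵀS²A)^{−1}a_i ≤ exp(ε)·c_i for every i ∈ [n], then the matrix R := (AᵀS²A)^{−1/2} (the inverse of the positive-definite square root of AᵀS²A) satisfies exp(−ε)·I_d ⪯ Σ_{i=1}^n c_i·(R a_i)(R a_i)ᵀ/‖R a_i‖₂² ⪯ exp(ε)·I_d. -/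
open Matrix

/-- If the scaling `s` induces leverage scores within `exp(±ε)` of `c`,
then `R := (AᵀS²A)^{-1/2}` (characterized as the positive-definite matrix with
`R (AᵀS²A) R = I`) places `A` in `(c, ε)`-radial isotropic position. -/
theorem stmt_0 (n d : ℕ) (hn : 1 ≤ n) (hd : 1 ≤ d)
    (A : Matrix (Fin n) (Fin d) ℝ)
    (hspan : Submodule.span ℝ (Set.range fun i => A i) = ⊤)
    (hrows : ∀ i, A i ≠ 0)
    (s : Fin n → ℝ) (hs : ∀ i, 0 < s i)
    (c : Fin n → ℝ) (hc : ∀ i, 0 < c i)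
    (ε : ℝ) (hε : 0 < ε)
    (hlev : ∀ i,
      Real.exp (-ε) * c i ≤ s i ^ 2 * (A i ⬝ᵥ ((Aᵀ * Matrix.diagonal s ^ 2 * A)⁻¹ *ᵥ A i)) ∧
      s i ^ 2 * (A i ⬝ᵥ ((Aᵀ * Matrix.diagonal s ^ 2 * A)⁻¹ *ᵥ A i)) ≤ Real.exp ε * c i)
    (R : Matrix (Fin d) (Fin d) ℝ) (hRpos : R.PosDef)
    (hRZ : R * (Aᵀ * Matrix.diagonal s ^ 2 * A) * R = 1) :
    ((∑ i, (c i / ((R *ᵥ A i) ⬝ᵥ (R *ᵥ A i))) • vecMulVec (R *ᵥ A i) (R *ᵥ A i))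
        - Real.exp (-ε) • (1 : Matrix (Fin d) (Fin d) ℝ)).PosSemidef ∧
    (Real.exp ε • (1 : Matrix (Fin d) (Fin d) ℝ)
        - ∑ i, (c i / ((R *ᵥ A i) ⬝ᵥ (R *ᵥ A i))) • vecMulVec (R *ᵥ A i) (R *ᵥ A i)).PosSemidef := by
  classical
  set M : Matrix (Fin d) (Fin d) ℝ := Aᵀ * Matrix.diagonal s ^ 2 * A with hMdef
  have hRsymm : Rᵀ = R := by
    have h := hRpos.isHermitian
    rwa [Matrix.IsHermitian, Matrix.conjTranspose_eq_transpose_of_trivial] at h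
  have hRunit : IsUnit R.det := hRpos.det_pos.ne'.isUnit
  have hswap : ∀ (x y : Fin d → ℝ), x ⬝ᵥ (R *ᵥ y) = (R *ᵥ x) ⬝ᵥ y := by
    intro x y
    rw [Matrix.dotProduct_mulVec, ← Matrix.mulVec_transpose, hRsymm]
  have hMinv : M⁻¹ = R * R := by
    have hM : M = R⁻¹ * R⁻¹ := by
      have h1 : R⁻¹ * (R * M * R) * R⁻¹ = M := by
        rw [show R * M * R = R * (M * R) from mul_assoc _ _ _, ← mul_assoc R⁻¹ R (M * R),
          Matrix.nonsing_inv_mul R hRunit, one_mul, mul_assoc,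
          Matrix.mul_nonsing_inv R hRunit, mul_one]
      rw [← h1, hRZ, mul_one]
    rw [hM, Matrix.mul_inv_rev, Matrix.nonsing_inv_nonsing_inv R hRunit]
  set v : Fin n → Fin d → ℝ := fun i => R *ᵥ A i with hv
  have hlevid : ∀ i, A i ⬝ᵥ (M⁻¹ *ᵥ A i) = v i ⬝ᵥ v i := by
    intro i
    rw [hMinv, ← Matrix.mulVec_mulVec, hswap]
  have hvpos : ∀ i, 0 < v i ⬝ᵥ v i := by
    intro i
    have hvne : v i ≠ 0 := by
      intro h
      apply hrows i
      have h0 : R⁻¹ *ᵥ v i = 0 := by rw [h, Matrix.mulVec_zero]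
      simp only [hv] at h0
      rwa [Matrix.mulVec_mulVec, Matrix.nonsing_inv_mul R hRunit, Matrix.one_mulVec] at h0
    have h0 : v i ⬝ᵥ v i ≠ 0 := fun h => hvne (dotProduct_self_eq_zero.mp h)
    have hnn : 0 ≤ v i ⬝ᵥ v i := Finset.sum_nonneg fun j _ => mul_self_nonneg _
    exact lt_of_le_of_ne hnn (Ne.symm h0)
  have hdiag : (Matrix.diagonal s ^ 2 : Matrix (Fin n) (Fin n) ℝ)
      = Matrix.diagonal (fun i => s i * s i) := by
    rw [sq, Matrix.diagonal_mul_diagonal]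
  have hkey : ∀ x : Fin d → ℝ, ∑ i, s i ^ 2 * (v i ⬝ᵥ x) ^ 2 = x ⬝ᵥ x := by
    intro x
    have h1 : x ⬝ᵥ ((R * M * R) *ᵥ x) = x ⬝ᵥ x := by rw [hRZ, Matrix.one_mulVec]
    rw [← Matrix.mulVec_mulVec, ← Matrix.mulVec_mulVec, hswap] at h1
    rw [← h1, hMdef, ← Matrix.mulVec_mulVec, ← Matrix.mulVec_mulVec,
      Matrix.dotProduct_mulVec (R *ᵥ x) Aᵀ, ← Matrix.mulVec_transpose Aᵀ,
      Matrix.transpose_transpose, hdiag]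
    simp only [dotProduct]
    refine Finset.sum_congr rfl fun i _ => ?_
    rw [Matrix.mulVec_diagonal]
    have hu : (A *ᵥ (R *ᵥ x)) i = v i ⬝ᵥ x := by
      have : (A *ᵥ (R *ᵥ x)) i = A i ⬝ᵥ (R *ᵥ x) := rfl
      rw [this, hswap]
    rw [hu]
    simp only [dotProduct]
    ring
  have hquad : ∀ x : Fin d → ℝ,
      x ⬝ᵥ ((∑ i, (c i / (v i ⬝ᵥ v i)) • vecMulVec (v i) (v i)) *ᵥ x)
        = ∑ i, (c i / (v i ⬝ᵥ v i)) * (v i ⬝ᵥ x) ^ 2 := by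
    intro x
    have hsum : (∑ i, (c i / (v i ⬝ᵥ v i)) • vecMulVec (v i) (v i)) *ᵥ x
        = ∑ i, ((c i / (v i ⬝ᵥ v i)) • vecMulVec (v i) (v i)) *ᵥ x := by
      funext j
      simp only [Matrix.mulVec, dotProduct, Matrix.sum_apply, Finset.sum_apply,
        Finset.sum_mul]
      rw [Finset.sum_comm]
    have hdsum : x ⬝ᵥ (∑ i, ((c i / (v i ⬝ᵥ v i)) • vecMulVec (v i) (v i)) *ᵥ x)
        = ∑ i, x ⬝ᵥ (((c i / (v i ⬝ᵥ v i)) • vecMulVec (v i) (v i)) *ᵥ x) := by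
      simp only [dotProduct, Finset.sum_apply, Finset.mul_sum]
      rw [Finset.sum_comm]
    rw [hsum, hdsum]
    refine Finset.sum_congr rfl fun i _ => ?_
    rw [Matrix.smul_mulVec, dotProduct_smul, smul_eq_mul]
    congr 1
    have hvv : vecMulVec (v i) (v i) *ᵥ x = (v i ⬝ᵥ x) • v i := by
      funext j
      simp only [Matrix.mulVec, dotProduct, Matrix.vecMulVec_apply, Pi.smul_apply,
        smul_eq_mul, Finset.sum_mul]
      refine Finset.sum_congr rfl fun k _ => by ring
    rw [hvv, dotProduct_smul, smul_eq_mul, dotProduct_comm, sq]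
  have hexp : Real.exp (-ε) * Real.exp ε = 1 := by
    rw [← Real.exp_add]; simp
  have hbounds : ∀ i, Real.exp (-ε) * (s i ^ 2) ≤ c i / (v i ⬝ᵥ v i) ∧
      c i / (v i ⬝ᵥ v i) ≤ Real.exp ε * (s i ^ 2) := by
    intro i
    obtain ⟨hl, hr⟩ := hlev i
    rw [hlevid i] at hl hr
    have hpos := hvpos i
    constructor
    · rw [le_div_iff₀ hpos]
      nlinarith [mul_le_mul_of_nonneg_left hr (Real.exp_pos (-ε)).le, hexp, (hc i).le]
    · rw [div_le_iff₀ hpos]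
      nlinarith [mul_le_mul_of_nonneg_left hl (Real.exp_pos ε).le, hexp, (hc i).le]
  have hhermS : (∑ i, (c i / (v i ⬝ᵥ v i)) • vecMulVec (v i) (v i)).IsHermitian := by
    show _ = _
    ext i j
    simp only [Matrix.conjTranspose_apply, Matrix.sum_apply, Matrix.smul_apply,
      Matrix.vecMulVec_apply, smul_eq_mul, star_trivial]
    refine Finset.sum_congr rfl fun k _ => ?_
    ring
  have hherm1 : ∀ r : ℝ, (r • (1 : Matrix (Fin d) (Fin d) ℝ)).IsHermitian := by
    intro r
    show _ = _
    ext i j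
    simp only [Matrix.conjTranspose_apply, Matrix.smul_apply, smul_eq_mul, star_trivial]
    by_cases h : i = j
    · subst h; rfl
    · rw [Matrix.one_apply_ne h, Matrix.one_apply_ne (Ne.symm h)]
  constructor
  · refine posSemidef_iff_dotProduct_mulVec.mpr ⟨hhermS.sub (hherm1 _), fun x => ?_⟩
    have hx : (star x : Fin d → ℝ) = x := by
      funext j; exact star_trivial _
    rw [hx, Matrix.sub_mulVec, dotProduct_sub, hquad x, Matrix.smul_mulVec,
      Matrix.one_mulVec, dotProduct_smul, smul_eq_mul, ← hkey x, sub_nonneg,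
      Finset.mul_sum]
    refine Finset.sum_le_sum fun i _ => ?_
    nlinarith [sq_nonneg (v i ⬝ᵥ x), (hbounds i).1]
  · refine posSemidef_iff_dotProduct_mulVec.mpr ⟨(hherm1 _).sub hhermS, fun x => ?_⟩
    have hx : (star x : Fin d → ℝ) = x := by
      funext j; exact star_trivial _
    rw [hx, Matrix.sub_mulVec, dotProduct_sub, hquad x, Matrix.smul_mulVec,
      Matrix.one_mulVec, dotProduct_smul, smul_eq_mul, ← hkey x, sub_nonneg,
      Finset.mul_sum]
    refine Finset.sum_le_sum fun i _ => ?_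
    nlinarith [sq_nonneg (v i ⬝ᵥ x), (hbounds i).2]
end

section
/- Let n, d ≥ 1, let A ∈ ℝ^{n×d} have rows a_1, …, a_n ∈ ℝ^d which span ℝ^d and are all nonzero, and let c ∈ ℝ^n have all entries positive. If t* ∈ ℝ^n satisfies f(t*) ≤ f(t) for all t ∈ ℝ^n, then exp(t*_i)·a_iᵀ Z(t*)^{−1} a_i = c_i for every i ∈ [n], and consequently R := Z(t*)^{−1/2} (the inverse of the positive-definite square root of Z(t*)) satisfies Σ_{i=1}^n c_i·(R a_i)(R a_i)ᵀ/‖R a_i‖₂² = I_d. -/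
open Matrix

/-- `Z(t) := ∑ i, exp (t i) • a_i a_iᵀ`, where `a_i` are the rows of `A`. -/
noncomputable def Zmat {n d : ℕ} (A : Matrix (Fin n) (Fin d) ℝ) (t : Fin n → ℝ) :
    Matrix (Fin d) (Fin d) ℝ :=
  ∑ i, Real.exp (t i) • vecMulVec (A i) (A i)

/-- Barthe's objective `f(t) := -⟨c, t⟩ + log det Z(t)`. -/
noncomputable def barthe {n d : ℕ} (A : Matrix (Fin n) (Fin d) ℝ) (c : Fin n → ℝ)
    (t : Fin n → ℝ) : ℝ :=
  -(∑ i, c i * t i) + Real.log (Zmat A t).det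

lemma aux_vecMulVec {d : ℕ} (v : Fin d → ℝ) (R : Matrix (Fin d) (Fin d) ℝ) :
    vecMulVec (R *ᵥ v) (R *ᵥ v) = R * vecMulVec v v * Rᵀ := by
  ext j k
  simp only [vecMulVec, mul_apply, mulVec, dotProduct, of_apply, transpose_apply,
    Finset.sum_mul, Finset.mul_sum]
  exact Finset.sum_congr rfl fun a _ => Finset.sum_congr rfl fun b _ => by ring

lemma sum_mulVec' {n d : ℕ} (M : Fin n → Matrix (Fin d) (Fin d) ℝ) (x : Fin d → ℝ) :
    (∑ i, M i) *ᵥ x = ∑ i, M i *ᵥ x := by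
  ext j
  simp only [mulVec, dotProduct, Finset.sum_apply, Matrix.sum_apply, Finset.sum_mul]
  rw [Finset.sum_comm]

lemma dotProduct_sum' {n d : ℕ} (x : Fin d → ℝ) (w : Fin n → Fin d → ℝ) :
    x ⬝ᵥ (∑ i, w i) = ∑ i, x ⬝ᵥ w i := by
  simp only [dotProduct, Finset.sum_apply, Finset.mul_sum]
  rw [Finset.sum_comm]

lemma vecMulVec_mulVec' {d : ℕ} (v w x : Fin d → ℝ) :
    vecMulVec v w *ᵥ x = (w ⬝ᵥ x) • v := by
  ext j
  simp only [mulVec, vecMulVec, dotProduct, of_apply, Pi.smul_apply, smul_eq_mul,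
    Finset.sum_mul, Finset.mul_sum]
  exact Finset.sum_congr rfl fun a _ => by ring

lemma aux_quadform {n d : ℕ} (A : Matrix (Fin n) (Fin d) ℝ) (t : Fin n → ℝ) (x : Fin d → ℝ) :
    x ⬝ᵥ (Zmat A t *ᵥ x) = ∑ i, Real.exp (t i) * (A i ⬝ᵥ x) ^ 2 := by
  rw [Zmat, sum_mulVec', dotProduct_sum']
  refine Finset.sum_congr rfl fun i _ => ?_
  rw [smul_mulVec, vecMulVec_mulVec', dotProduct_smul, dotProduct_smul]
  simp only [smul_eq_mul, sq]
  rw [dotProduct_comm x (A i)]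

lemma aux_posdef {n d : ℕ} (A : Matrix (Fin n) (Fin d) ℝ)
    (hspan : Submodule.span ℝ (Set.range fun i => A i) = ⊤) (t : Fin n → ℝ) :
    (Zmat A t).PosDef := by
  refine Matrix.PosDef.of_dotProduct_mulVec_pos ?_ ?_
  · show (Zmat A t)ᴴ = Zmat A t
    ext j k
    simp only [conjTranspose_apply, star_trivial, Zmat, Matrix.sum_apply,
      Matrix.smul_apply, vecMulVec, of_apply, smul_eq_mul]
    exact Finset.sum_congr rfl fun i _ => by ring
  · intro x hx
    simp only [star_trivial]
    rw [aux_quadform]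
    have hex : ∃ i, A i ⬝ᵥ x ≠ 0 := by
      by_contra h
      push_neg at h
      apply hx
      let f : (Fin d → ℝ) →ₗ[ℝ] ℝ :=
        { toFun := fun y => y ⬝ᵥ x
          map_add' := fun a b => add_dotProduct a b x
          map_smul' := fun r a => smul_dotProduct r a x }
      have hker : Submodule.span ℝ (Set.range fun i => A i) ≤ LinearMap.ker f := by
        rw [Submodule.span_le]
        rintro y ⟨i, rfl⟩
        exact h i
      rw [hspan] at hker
      have hxx : x ⬝ᵥ x = 0 := hker Submodule.mem_top
      exact (dotProduct_self_eq_zero).mp hxx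
    obtain ⟨i, hi⟩ := hex
    apply Finset.sum_pos' (fun j _ => by positivity)
    exact ⟨i, Finset.mem_univ i, by positivity⟩

lemma aux_det_key {n d : ℕ} (A : Matrix (Fin n) (Fin d) ℝ)
    (hspan : Submodule.span ℝ (Set.range fun i => A i) = ⊤) (t : Fin n → ℝ)
    (v : Fin d → ℝ) (u : ℝ) :
    (Zmat A t + u • vecMulVec v v).det
      = (Zmat A t).det * (1 + u * (v ⬝ᵥ ((Zmat A t)⁻¹ *ᵥ v))) := by
  set Z := Zmat A t with hZ
  have hpd := aux_posdef A hspan t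
  have hdet : IsUnit Z.det := hpd.det_pos.ne'.isUnit
  have hfac : Z + u • vecMulVec v v = Z * (1 + Matrix.replicateCol Unit (u • (Z⁻¹ *ᵥ v)) * Matrix.replicateRow Unit v) := by
    rw [Matrix.mul_add, Matrix.mul_one]
    congr 1
    rw [← Matrix.mul_assoc]
    have h1 : Matrix.replicateCol Unit (u • (Z⁻¹ *ᵥ v)) = u • (Z⁻¹ * Matrix.replicateCol Unit v) := by
      rw [← Matrix.replicateCol_mulVec]
      ext a b
      simp
    rw [h1, Matrix.mul_smul, ← Matrix.mul_assoc, Matrix.mul_nonsing_inv _ hdet, Matrix.one_mul,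
      Matrix.smul_mul, ← vecMulVec_eq]
  rw [hfac, det_mul, det_one_add_replicateCol_mul_replicateRow, dotProduct_smul, smul_eq_mul, mul_comm u]

/-- at a global minimizer `t*` of Barthe's objective, the leverage
scores equal `c`, and `R := Z(t*)^{-1/2}` (characterized as the positive-definite
matrix with `R Z(t*) R = I`) is an exact `c`-Forster transform of `A`. -/
theorem stmt_1 (n d : ℕ) (hn : 1 ≤ n) (hd : 1 ≤ d)
    (A : Matrix (Fin n) (Fin d) ℝ)
    (hspan : Submodule.span ℝ (Set.range fun i => A i) = ⊤)
    (hrows : ∀ i, A i ≠ 0)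
    (c : Fin n → ℝ) (hc : ∀ i, 0 < c i)
    (tstar : Fin n → ℝ) (hmin : ∀ t, barthe A c tstar ≤ barthe A c t) :
    (∀ i, Real.exp (tstar i) * (A i ⬝ᵥ ((Zmat A tstar)⁻¹ *ᵥ A i)) = c i) ∧
    ∀ R : Matrix (Fin d) (Fin d) ℝ, R.PosDef → R * Zmat A tstar * R = 1 →
      ∑ i, (c i / ((R *ᵥ A i) ⬝ᵥ (R *ᵥ A i))) • vecMulVec (R *ᵥ A i) (R *ᵥ A i) = 1 := by
  set Z := Zmat A tstar with hZ
  have hpd := aux_posdef A hspan tstar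
  have hD : 0 < Z.det := hpd.det_pos
  -- part 1
  have part1 : ∀ i, Real.exp (tstar i) * (A i ⬝ᵥ (Z⁻¹ *ᵥ A i)) = c i := by
    intro i
    set s₀ := tstar i with hs₀
    set v := A i with hv
    set q := v ⬝ᵥ (Z⁻¹ *ᵥ v) with hq
    set D := Z.det with hDdef
    -- Zmat at updated point
    have hupd : ∀ s : ℝ, Zmat A (Function.update tstar i s)
        = Z + (Real.exp s - Real.exp s₀) • vecMulVec v v := by
      intro s
      have hsub : Zmat A (Function.update tstar i s) - Z
          = (Real.exp s - Real.exp s₀) • vecMulVec v v := by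
        rw [hZ, Zmat, Zmat, ← Finset.sum_sub_distrib]
        rw [Finset.sum_eq_single i]
        · rw [Function.update_self, ← sub_smul]
        · intro j _ hj
          rw [Function.update_of_ne hj, sub_self]
        · intro hcon
          exact absurd (Finset.mem_univ i) hcon
      have := eq_add_of_sub_eq hsub
      rw [this, add_comm]
    have hdetupd : ∀ s : ℝ, (Zmat A (Function.update tstar i s)).det
        = D * (1 + (Real.exp s - Real.exp s₀) * q) := by
      intro s
      rw [hupd s, hZ]
      exact aux_det_key A hspan tstar v _
    have hlin : ∀ s : ℝ, (∑ j, c j * Function.update tstar i s j)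
        = (∑ j, c j * tstar j) + c i * (s - s₀) := by
      intro s
      have hsub : (∑ j, c j * Function.update tstar i s j) - (∑ j, c j * tstar j)
          = c i * (s - s₀) := by
        rw [← Finset.sum_sub_distrib]
        rw [Finset.sum_eq_single i]
        · rw [Function.update_self]; ring
        · intro j _ hj
          rw [Function.update_of_ne hj, sub_self]
        · intro hcon
          exact absurd (Finset.mem_univ i) hcon
      linarith [hsub]
    -- g equals closed form G
    have hG : ∀ s : ℝ, barthe A c (Function.update tstar i s)
        = -((∑ j, c j * tstar j) + c i * (s - s₀))
          + Real.log (D * (1 + (Real.exp s - Real.exp s₀) * q)) := by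
      intro s
      rw [barthe, hlin s, hdetupd s]
    -- derivative
    have hq0 : 0 < q := by
      have hpdi := hpd.inv
      have := hpdi.dotProduct_mulVec_pos (hrows i)
      simpa using this
    have hderiv : HasDerivAt (fun s => barthe A c (Function.update tstar i s))
        (-(c i) + Real.exp s₀ * q) s₀ := by
      have h1 : HasDerivAt (fun s : ℝ => -((∑ j, c j * tstar j) + c i * (s - s₀)))
          (-(c i)) s₀ := by
        have : HasDerivAt (fun s : ℝ => s - s₀) 1 s₀ := (hasDerivAt_id s₀).sub_const s₀
        have := ((this.const_mul (c i)).const_add (∑ j, c j * tstar j)).neg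
        exact this.congr_deriv (by ring)
      have h2 : HasDerivAt (fun s : ℝ => D * (1 + (Real.exp s - Real.exp s₀) * q))
          (D * (Real.exp s₀ * q)) s₀ := by
        have he : HasDerivAt (fun s : ℝ => Real.exp s - Real.exp s₀) (Real.exp s₀) s₀ :=
          (Real.hasDerivAt_exp s₀).sub_const _
        have := ((he.mul_const q).const_add 1).const_mul D
        simpa [mul_comm, mul_assoc] using this
      have hne : D * (1 + (Real.exp s₀ - Real.exp s₀) * q) ≠ 0 := by
        simp [hD.ne']
      have h3 := (h2.log hne)
      have h4 := h1.add h3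
      have : (-(c i) + D * (Real.exp s₀ * q) / (D * (1 + (Real.exp s₀ - Real.exp s₀) * q)))
          = -(c i) + Real.exp s₀ * q := by
        field_simp
        ring
      rw [this] at h4
      refine h4.congr_of_eventuallyEq ?_
      filter_upwards with s
      rw [hG s]
      rfl
    have hlocmin : IsLocalMin (fun s => barthe A c (Function.update tstar i s)) s₀ := by
      apply Filter.Eventually.of_forall
      intro s
      have : Function.update tstar i s₀ = tstar := Function.update_eq_self i tstar
      simp only [this]
      exact hmin _
    have hzero := hlocmin.hasDerivAt_eq_zero hderiv
    have : Real.exp s₀ * q = c i := by linarith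
    simpa [hq, hv, hs₀] using this
  refine ⟨part1, ?_⟩
  intro R hR hRZR
  have hRdet : IsUnit R.det := hR.det_pos.ne'.isUnit
  have hRt : Rᵀ = R := by
    ext a b
    conv_rhs => rw [← hR.isHermitian]
    simp [conjTranspose_apply]
  have hRR : R * R = Z⁻¹ := by
    have e1 : R⁻¹ * (R * Z * R) * R⁻¹ = Z := by
      simp only [← Matrix.mul_assoc]
      rw [Matrix.nonsing_inv_mul _ hRdet, Matrix.one_mul, Matrix.mul_assoc,
        Matrix.mul_nonsing_inv _ hRdet, Matrix.mul_one]
    rw [hRZR] at e1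
    have h1 : Z = R⁻¹ * R⁻¹ := by rw [← e1, Matrix.mul_one]
    rw [h1, Matrix.mul_inv_rev, Matrix.nonsing_inv_nonsing_inv _ hRdet]
  have hvR : ∀ w : Fin d → ℝ, w ᵥ* R = R *ᵥ w := by
    intro w
    rw [← Matrix.mulVec_transpose, hRt]
  have hnorm : ∀ i, (R *ᵥ A i) ⬝ᵥ (R *ᵥ A i) = A i ⬝ᵥ (Z⁻¹ *ᵥ A i) := by
    intro i
    have h0 : (R *ᵥ A i) ⬝ᵥ (R *ᵥ A i) = (A i ᵥ* R) ⬝ᵥ (R *ᵥ A i) := by rw [hvR]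
    rw [h0, ← Matrix.dotProduct_mulVec, Matrix.mulVec_mulVec, hRR]
  have hcoef : ∀ i, c i / ((R *ᵥ A i) ⬝ᵥ (R *ᵥ A i)) = Real.exp (tstar i) := by
    intro i
    rw [hnorm i, ← part1 i]
    have hq0 : A i ⬝ᵥ (Z⁻¹ *ᵥ A i) ≠ 0 := by
      have hpdi := hpd.inv
      have := hpdi.dotProduct_mulVec_pos (hrows i)
      simp only [star_trivial] at this
      exact this.ne'
    rw [mul_div_assoc, div_self hq0, mul_one]
  calc ∑ i, (c i / ((R *ᵥ A i) ⬝ᵥ (R *ᵥ A i))) • vecMulVec (R *ᵥ A i) (R *ᵥ A i)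
      = ∑ i, Real.exp (tstar i) • (R * vecMulVec (A i) (A i) * R) := by
        refine Finset.sum_congr rfl fun i _ => ?_
        rw [hcoef i, aux_vecMulVec, hRt]
    _ = R * Z * R := by
        rw [hZ, Zmat, Matrix.mul_sum, Matrix.sum_mul]
        refine Finset.sum_congr rfl fun i _ => ?_
        rw [Matrix.mul_smul, Matrix.smul_mul]
    _ = 1 := hRZR
end

section
/- Let M_1, …, M_n be real symmetric positive semidefinite d×d matrices with Σ_{i=1}^n M_i = I_d. Then for every v ∈ ℝ^n, Σ_{i=1}^n Σ_{j=1}^n v_i v_j · Tr(M_i M_j) ≤ Σ_{i=1}^n v_i² · Tr(M_i). -/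
open Matrix

lemma psd_trace_nonneg {d : ℕ} {P : Matrix (Fin d) (Fin d) ℝ} (hP : P.PosSemidef) :
    0 ≤ P.trace := by
  rw [Matrix.trace]
  refine Finset.sum_nonneg fun i _ => ?_
  exact hP.diag_nonneg

/-- if PSD matrices `M_1, …, M_n` sum to the identity, then
`∑_{i,j} v_i v_j Tr(M_i M_j) ≤ ∑_i v_i² Tr(M_i)` for every `v ∈ ℝ^n`. -/
theorem stmt_2 (n d : ℕ) (M : Fin n → Matrix (Fin d) (Fin d) ℝ)
    (hM : ∀ i, (M i).PosSemidef)
    (hsum : ∑ i, M i = 1)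
    (v : Fin n → ℝ) :
    ∑ i, ∑ j, v i * v j * (M i * M j).trace ≤ ∑ i, v i ^ 2 * (M i).trace := by
  set A : Matrix (Fin d) (Fin d) ℝ := ∑ i, v i • M i with hA
  have hAherm : Aᴴ = A := by
    rw [hA]
    simp only [conjTranspose_sum, conjTranspose_smul, star_trivial]
    exact Finset.sum_congr rfl fun i _ => by rw [(hM i).isHermitian.eq]
  have key : ∀ i, 0 ≤ ((v i • 1 - A) * M i * (v i • 1 - A)).trace := by
    intro i
    have hB : (v i • (1 : Matrix (Fin d) (Fin d) ℝ) - A)ᴴ = v i • 1 - A := by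
      rw [conjTranspose_sub, conjTranspose_smul, conjTranspose_one, hAherm, star_trivial]
    have h := (hM i).mul_mul_conjTranspose_same (v i • 1 - A)
    rw [hB] at h
    exact psd_trace_nonneg h
  -- trace identities
  have hAM : ∀ N : Matrix (Fin d) (Fin d) ℝ, (A * N).trace = ∑ i, v i * (M i * N).trace := by
    intro N
    simp [hA, Finset.sum_mul, trace_sum, smul_mul_assoc]
  have hT : (A * A).trace = ∑ i, ∑ j, v i * v j * (M i * M j).trace := by
    rw [hAM]
    refine Finset.sum_congr rfl fun i _ => ?_
    have : (M i * A).trace = ∑ j, v j * (M i * M j).trace := by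
      simp [hA, Finset.mul_sum, trace_sum, mul_smul_comm]
    rw [this, Finset.mul_sum]
    exact Finset.sum_congr rfl fun j _ => by ring
  have expand : ∀ i, ((v i • 1 - A) * M i * (v i • 1 - A)).trace
      = v i ^ 2 * (M i).trace - 2 * (v i * (A * M i).trace) + (M i * (A * A)).trace := by
    intro i
    have hmat : (v i • 1 - A) * M i * (v i • 1 - A)
        = (v i * v i) • M i - v i • (A * M i) - v i • (M i * A) + A * M i * A := by
      simp only [sub_mul, mul_sub, smul_mul_assoc, mul_smul_comm, one_mul, mul_one, smul_smul,
        smul_sub, smul_add, neg_one_smul, neg_smul]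
      abel
    rw [hmat]
    simp only [trace_add, trace_sub, trace_smul, smul_eq_mul]
    rw [trace_mul_comm (M i) A, trace_mul_comm (A * M i) A, ← mul_assoc,
      trace_mul_comm (A * A) (M i)]
    ring
  have hsum2 : ∑ i, ((v i • 1 - A) * M i * (v i • 1 - A)).trace
      = ∑ i, v i ^ 2 * (M i).trace - (A * A).trace := by
    simp only [expand]
    rw [Finset.sum_add_distrib, Finset.sum_sub_distrib]
    have h1 : ∑ i, 2 * (v i * (A * M i).trace) = 2 * (A * A).trace := by
      rw [← Finset.mul_sum]
      congr 1
      rw [hAM]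
      exact Finset.sum_congr rfl fun i _ => by rw [trace_mul_comm]
    have h2 : ∑ i, (M i * (A * A)).trace = (A * A).trace := by
      rw [← trace_sum, ← Finset.sum_mul, hsum, one_mul]
    rw [h1, h2]; ring
  have hpos : 0 ≤ ∑ i, ((v i • 1 - A) * M i * (v i • 1 - A)).trace :=
    Finset.sum_nonneg fun i _ => key i
  rw [hsum2] at hpos
  rw [← hT]
  linarith
end

section
/- Let A and B be real symmetric positive semidefinite matrices in block form A = fromBlocks(A₁₁, A₁₂, A₁₂ᵀ, A₂₂) and B = fromBlocks(B₁₁, B₁₂, B₁₂ᵀ, B₂₂), where the lower-right blocks A₂₂ and B₂₂ are positive definite. If A ⪰ B, then the Schur complements satisfy A₁₁ − A₁₂ A₂₂^{−1} A₁₂ᵀ ⪰ B₁₁ − B₁₂ B₂₂^{−1} B₁₂ᵀ. -/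
open Matrix

/-- monotonicity of the Schur complement. If `A ⪰ B` are PSD block
matrices with positive definite lower-right blocks, then the Schur complement of
`A` onto the first block dominates that of `B`. -/
theorem stmt_3 {m l : Type*} [Fintype m] [Fintype l] [DecidableEq l]
    (A11 B11 : Matrix m m ℝ) (A12 B12 : Matrix m l ℝ) (A22 B22 : Matrix l l ℝ)
    (hA : (Matrix.fromBlocks A11 A12 A12ᵀ A22).PosSemidef)
    (hB : (Matrix.fromBlocks B11 B12 B12ᵀ B22).PosSemidef)
    (hA22 : A22.PosDef) (hB22 : B22.PosDef)
    (hAB : ((Matrix.fromBlocks A11 A12 A12ᵀ A22)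
        - Matrix.fromBlocks B11 B12 B12ᵀ B22).PosSemidef) :
    ((A11 - A12 * A22⁻¹ * A12ᵀ) - (B11 - B12 * B22⁻¹ * B12ᵀ)).PosSemidef := by
  haveI : Invertible A22 := A22.invertibleOfIsUnitDet (isUnit_iff_ne_zero.mpr hA22.det_pos.ne')
  haveI : Invertible B22 := B22.invertibleOfIsUnitDet (isUnit_iff_ne_zero.mpr hB22.det_pos.ne')
  have hA12 : A12ᵀ = A12ᴴ := (conjTranspose_eq_transpose_of_trivial A12).symm
  have hB12 : B12ᵀ = B12ᴴ := (conjTranspose_eq_transpose_of_trivial B12).symm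
  have hSA : (A11 - A12 * A22⁻¹ * A12ᵀ).PosSemidef := by
    rw [hA12] at hA ⊢
    exact (PosDef.fromBlocks₂₂ A11 A12 hA22).mp hA
  have hSB : (B11 - B12 * B22⁻¹ * B12ᵀ).PosSemidef := by
    rw [hB12] at hB ⊢
    exact (PosDef.fromBlocks₂₂ B11 B12 hB22).mp hB
  refine PosSemidef.of_dotProduct_mulVec_nonneg (hSA.1.sub hSB.1) fun x => ?_
  set y : l → ℝ := -((A22⁻¹ * A12ᵀ) *ᵥ x) with hy
  set z : m ⊕ l → ℝ := x ⊕ᵥ y with hz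
  have hEqA : (star z) ᵥ* (fromBlocks A11 A12 A12ᵀ A22) ⬝ᵥ z =
      (star x) ᵥ* (A11 - A12 * A22⁻¹ * A12ᵀ) ⬝ᵥ x := by
    rw [hz, hA12, schur_complement_eq₂₂ A11 A12 x y hA22.isHermitian]
    rw [hy, ← hA12]
    simp
  have hEqB : (star z) ᵥ* (fromBlocks B11 B12 B12ᵀ B22) ⬝ᵥ z =
      (star ((B22⁻¹ * B12ᵀ) *ᵥ x + y)) ᵥ* B22 ⬝ᵥ ((B22⁻¹ * B12ᵀ) *ᵥ x + y) +
        (star x) ᵥ* (B11 - B12 * B22⁻¹ * B12ᵀ) ⬝ᵥ x := by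
    rw [hz, hB12, schur_complement_eq₂₂ B11 B12 x y hB22.isHermitian, ← hB12]
  have h1 : 0 ≤ (star z) ᵥ* (fromBlocks A11 A12 A12ᵀ A22) ⬝ᵥ z
      - (star z) ᵥ* (fromBlocks B11 B12 B12ᵀ B22) ⬝ᵥ z := by
    have := hAB.dotProduct_mulVec_nonneg z
    rw [sub_mulVec, dotProduct_sub, dotProduct_mulVec, dotProduct_mulVec] at this
    linarith
  have h2 : 0 ≤ (star ((B22⁻¹ * B12ᵀ) *ᵥ x + y)) ᵥ* B22 ⬝ᵥ ((B22⁻¹ * B12ᵀ) *ᵥ x + y) := by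
    rw [← dotProduct_mulVec]
    exact hB22.posSemidef.dotProduct_mulVec_nonneg _
  rw [hEqA, hEqB] at h1
  rw [dotProduct_mulVec, vecMul_sub, sub_dotProduct]
  linarith
end

section
/- Let n, d ≥ 1, let A ∈ ℝ^{n×d} have rows a_1, …, a_n ∈ ℝ^d which span ℝ^d, and let r > 0. For all t, t' ∈ ℝ^n with max_{i∈[n]} |t_i − t'_i| ≤ r and all v ∈ ℝ^n, exp(−2r)·H(t')[v,v] ≤ H(t)[v,v] ≤ exp(2r)·H(t')[v,v]. (That is, Barthe's objective is (r, 2r)-Hessian stable with respect to the ℓ∞ norm.) -/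
set_option maxHeartbeats 1000000

open Matrix

/-- The quadratic form of the Hessian of Barthe's objective:
`H(t)[v,v] = ∑ i, v_i² exp(t_i) a_iᵀ Z(t)⁻¹ a_i
  - ∑ i j, v_i v_j exp(t_i + t_j) (a_iᵀ Z(t)⁻¹ a_j)²`. -/
noncomputable def bartheH {n d : ℕ} (A : Matrix (Fin n) (Fin d) ℝ) (t v : Fin n → ℝ) : ℝ :=
  (∑ i, v i ^ 2 * Real.exp (t i) * (A i ⬝ᵥ ((Zmat A t)⁻¹ *ᵥ A i)))
    - ∑ i, ∑ j, v i * v j * Real.exp (t i + t j) * (A i ⬝ᵥ ((Zmat A t)⁻¹ *ᵥ A j)) ^ 2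

namespace BartheAux

variable {n d : ℕ}

lemma vecMulVec_mulVec' (a b x : Fin d → ℝ) : vecMulVec a b *ᵥ x = (b ⬝ᵥ x) • a := by
  ext i
  simp only [vecMulVec_apply, mulVec, dotProduct, Pi.smul_apply, smul_eq_mul, Finset.sum_mul]
  exact Finset.sum_congr rfl fun j _ => by ring

lemma sum_mulVec' {k : ℕ} (f : Fin k → Matrix (Fin d) (Fin d) ℝ) (x : Fin d → ℝ) :
    (∑ i, f i) *ᵥ x = ∑ i, f i *ᵥ x := by
  ext j
  simp only [mulVec, dotProduct, Matrix.sum_apply, Finset.sum_apply, Finset.sum_mul]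
  rw [Finset.sum_comm]

lemma dotProduct_sum' {k : ℕ} (v : Fin d → ℝ) (w : Fin k → Fin d → ℝ) :
    v ⬝ᵥ (∑ i, w i) = ∑ i, v ⬝ᵥ w i := by
  simp only [dotProduct, Finset.sum_apply, Finset.mul_sum]
  rw [Finset.sum_comm]

lemma zmat_mulVec (A : Matrix (Fin n) (Fin d) ℝ) (t : Fin n → ℝ) (x : Fin d → ℝ) :
    Zmat A t *ᵥ x = ∑ i, (Real.exp (t i) * (A i ⬝ᵥ x)) • A i := by
  rw [Zmat, sum_mulVec']
  refine Finset.sum_congr rfl fun i _ => ?_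
  rw [smul_mulVec, vecMulVec_mulVec', smul_smul]

lemma zmat_quad (A : Matrix (Fin n) (Fin d) ℝ) (t : Fin n → ℝ) (x : Fin d → ℝ) :
    x ⬝ᵥ (Zmat A t *ᵥ x) = ∑ i, Real.exp (t i) * (A i ⬝ᵥ x) ^ 2 := by
  rw [zmat_mulVec, dotProduct_sum']
  refine Finset.sum_congr rfl fun i _ => ?_
  rw [dotProduct_smul, smul_eq_mul, dotProduct_comm]
  ring

end BartheAux
namespace BartheAux
variable {n d : ℕ}

lemma dot_eq_zero_of_span {A : Matrix (Fin n) (Fin d) ℝ}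
    (hspan : Submodule.span ℝ (Set.range fun i => A i) = ⊤)
    {x : Fin d → ℝ} (h : ∀ i, A i ⬝ᵥ x = 0) : x = 0 := by
  have hx : x ∈ Submodule.span ℝ (Set.range fun i => A i) := by rw [hspan]; trivial
  have key : ∀ y ∈ Submodule.span ℝ (Set.range fun i => A i), y ⬝ᵥ x = 0 := by
    intro y hy
    induction hy using Submodule.span_induction with
    | mem y hy => obtain ⟨i, rfl⟩ := hy; exact h i
    | zero => simp
    | add y z _ _ hy hz => rw [add_dotProduct, hy, hz, add_zero]
    | smul c y _ hy => rw [smul_dotProduct, hy, smul_zero]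
  exact dotProduct_self_eq_zero.mp (key x hx)

lemma posdef_of_symm {P : Matrix (Fin d) (Fin d) ℝ} (hsymm : Pᵀ = P)
    (hpos : ∀ x : Fin d → ℝ, x ≠ 0 → 0 < x ⬝ᵥ (P *ᵥ x)) : P.PosDef := by
  refine posDef_iff_dotProduct_mulVec.mpr ⟨?_, ?_⟩
  · ext i j
    simp only [conjTranspose_apply, star_trivial]
    conv_lhs => rw [← hsymm]
    rfl
  · intro x hx
    simpa using hpos x hx

lemma zmat_symm (A : Matrix (Fin n) (Fin d) ℝ) (t : Fin n → ℝ) : (Zmat A t)ᵀ = Zmat A t := by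
  unfold Zmat
  ext i j
  simp [Matrix.sum_apply, transpose_apply, vecMulVec_apply, mul_comm]

lemma zmat_posdef {A : Matrix (Fin n) (Fin d) ℝ}
    (hspan : Submodule.span ℝ (Set.range fun i => A i) = ⊤) (t : Fin n → ℝ) :
    (Zmat A t).PosDef := by
  refine posdef_of_symm (zmat_symm A t) fun x hx => ?_
  rw [zmat_quad]
  have h1 : ∀ i, 0 ≤ Real.exp (t i) * (A i ⬝ᵥ x) ^ 2 :=
    fun i => mul_nonneg (Real.exp_pos _).le (sq_nonneg _)
  refine lt_of_le_of_ne (Finset.sum_nonneg fun i _ => h1 i) fun h => hx ?_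
  refine dot_eq_zero_of_span hspan fun i => ?_
  have h0 := (Finset.sum_eq_zero_iff_of_nonneg (fun i _ => h1 i)).mp h.symm i (Finset.mem_univ i)
  have h3 := (mul_eq_zero.mp h0).resolve_left (Real.exp_pos _).ne'
  exact pow_eq_zero_iff two_ne_zero |>.mp h3

end BartheAux

namespace BartheAux
variable {n d : ℕ}

section Facts
variable {A : Matrix (Fin n) (Fin d) ℝ} (t : Fin n → ℝ)

variable (A) in
abbrev Spans : Prop := Submodule.span ℝ (Set.range fun i => A i) = ⊤

lemma zmat_det_isUnit (hspan : Spans A) : IsUnit (Zmat A t).det :=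
  (zmat_posdef hspan t).det_pos.ne'.isUnit

lemma zmat_mul_inv (hspan : Spans A) : Zmat A t * (Zmat A t)⁻¹ = 1 :=
  Matrix.mul_nonsing_inv _ (zmat_det_isUnit t hspan)

lemma zmat_inv_mul (hspan : Spans A) : (Zmat A t)⁻¹ * Zmat A t = 1 :=
  Matrix.nonsing_inv_mul _ (zmat_det_isUnit t hspan)

lemma zmat_inv_symm : ((Zmat A t)⁻¹)ᵀ = (Zmat A t)⁻¹ := by
  rw [Matrix.transpose_nonsing_inv, zmat_symm]

/-- symmetry of a bilinear form with a symmetric matrix -/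
lemma form_symm {P : Matrix (Fin d) (Fin d) ℝ} (hsymm : Pᵀ = P) (x y : Fin d → ℝ) :
    x ⬝ᵥ (P *ᵥ y) = y ⬝ᵥ (P *ᵥ x) := by
  rw [dotProduct_mulVec, ← mulVec_transpose, hsymm, dotProduct_comm]

lemma zmat_inv_psd (hspan : Spans A) (x : Fin d → ℝ) : 0 ≤ x ⬝ᵥ ((Zmat A t)⁻¹ *ᵥ x) := by
  have := ((zmat_posdef hspan t).inv).posSemidef.dotProduct_mulVec_nonneg x
  simpa using this

/-- contraction identity: `∑ i, e^{t_i} (a_i ⬝ M y)(a_i ⬝ z) = y ⬝ z` with `M = Z(t)⁻¹`. -/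
lemma contraction (hspan : Spans A) (y z : Fin d → ℝ) :
    ∑ i, Real.exp (t i) * ((A i ⬝ᵥ ((Zmat A t)⁻¹ *ᵥ y)) * (A i ⬝ᵥ z)) = y ⬝ᵥ z := by
  have h1 : ((Zmat A t)⁻¹ *ᵥ y) ⬝ᵥ (Zmat A t *ᵥ z) = y ⬝ᵥ z := by
    rw [dotProduct_mulVec, ← mulVec_transpose, zmat_symm, mulVec_mulVec,
      zmat_mul_inv t hspan, one_mulVec]
  rw [← h1, zmat_mulVec, dotProduct_sum']
  refine Finset.sum_congr rfl fun i _ => ?_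
  rw [dotProduct_smul, smul_eq_mul, dotProduct_comm]
  ring

end Facts
end BartheAux

namespace BartheAux
variable {n d : ℕ}

/-- the optimal matrix `X₀ = W(t,v) Z(t)⁻¹` in the variational representation. -/
noncomputable def Xopt (A : Matrix (Fin n) (Fin d) ℝ) (t v : Fin n → ℝ) :
    Matrix (Fin d) (Fin d) ℝ :=
  (∑ i, (v i * Real.exp (t i)) • vecMulVec (A i) (A i)) * (Zmat A t)⁻¹

lemma sum_dotProduct' {k : ℕ} (w : Fin k → Fin d → ℝ) (z : Fin d → ℝ) :
    (∑ i, w i) ⬝ᵥ z = ∑ i, w i ⬝ᵥ z := by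
  rw [dotProduct_comm, dotProduct_sum']
  exact Finset.sum_congr rfl fun i _ => dotProduct_comm _ _

section Main
variable {A : Matrix (Fin n) (Fin d) ℝ} (t v : Fin n → ℝ)

lemma xopt_mulVec (x : Fin d → ℝ) :
    Xopt A t v *ᵥ x = ∑ j, (v j * Real.exp (t j) * (A j ⬝ᵥ ((Zmat A t)⁻¹ *ᵥ x))) • A j := by
  rw [Xopt, ← mulVec_mulVec, sum_mulVec']
  refine Finset.sum_congr rfl fun j _ => ?_
  rw [smul_mulVec, vecMulVec_mulVec', smul_smul]

/-- expansion of `(X₀ a_i) ⬝ᵥ M w`. -/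
lemma xopt_dot (x w : Fin d → ℝ) :
    (Xopt A t v *ᵥ x) ⬝ᵥ ((Zmat A t)⁻¹ *ᵥ w)
      = ∑ j, v j * Real.exp (t j) * ((A j ⬝ᵥ ((Zmat A t)⁻¹ *ᵥ x)) * (A j ⬝ᵥ ((Zmat A t)⁻¹ *ᵥ w))) := by
  rw [xopt_mulVec, sum_dotProduct']
  refine Finset.sum_congr rfl fun j _ => ?_
  rw [smul_dotProduct, smul_eq_mul]
  ring

lemma dot_MX (X : Matrix (Fin d) (Fin d) ℝ) (x y : Fin d → ℝ) :
    x ⬝ᵥ ((Zmat A t)⁻¹ *ᵥ (X *ᵥ y)) = y ⬝ᵥ (((Zmat A t)⁻¹ * X)ᵀ *ᵥ x) := by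
  rw [mulVec_mulVec, dotProduct_mulVec, ← mulVec_transpose]
  exact dotProduct_comm _ _

/-- E1 : `∑ i e_i (X₀ a_i)ᵀ M (X a_i) = ∑ i e_i v_i a_iᵀ M (X a_i)`. -/
lemma E1 (hspan : Spans A) (X : Matrix (Fin d) (Fin d) ℝ) :
    ∑ i, Real.exp (t i) * ((Xopt A t v *ᵥ A i) ⬝ᵥ ((Zmat A t)⁻¹ *ᵥ (X *ᵥ A i)))
      = ∑ i, Real.exp (t i) * (v i * (A i ⬝ᵥ ((Zmat A t)⁻¹ *ᵥ (X *ᵥ A i)))) := by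
  have h1 : ∀ j, ∑ i, Real.exp (t i)
      * ((A i ⬝ᵥ ((Zmat A t)⁻¹ *ᵥ A j)) * (A i ⬝ᵥ (((Zmat A t)⁻¹ * X)ᵀ *ᵥ A j)))
      = A j ⬝ᵥ ((((Zmat A t)⁻¹ * X)ᵀ) *ᵥ A j) :=
    fun j => contraction t hspan (A j) _
  calc ∑ i, Real.exp (t i) * ((Xopt A t v *ᵥ A i) ⬝ᵥ ((Zmat A t)⁻¹ *ᵥ (X *ᵥ A i)))
      = ∑ i, ∑ j, Real.exp (t i) * (v j * Real.exp (t j) *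
          ((A i ⬝ᵥ ((Zmat A t)⁻¹ *ᵥ A j)) * (A i ⬝ᵥ (((Zmat A t)⁻¹ * X)ᵀ *ᵥ A j)))) := by
        refine Finset.sum_congr rfl fun i _ => ?_
        rw [xopt_dot, Finset.mul_sum]
        refine Finset.sum_congr rfl fun j _ => ?_
        rw [form_symm (zmat_inv_symm (A := A) t) (A j) (A i), dot_MX]
    _ = ∑ j, v j * Real.exp (t j) * ∑ i, Real.exp (t i) *
          ((A i ⬝ᵥ ((Zmat A t)⁻¹ *ᵥ A j)) * (A i ⬝ᵥ (((Zmat A t)⁻¹ * X)ᵀ *ᵥ A j))) := by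
        rw [Finset.sum_comm]
        refine Finset.sum_congr rfl fun j _ => ?_
        rw [Finset.mul_sum]
        exact Finset.sum_congr rfl fun i _ => by ring
    _ = ∑ j, v j * Real.exp (t j) * (A j ⬝ᵥ ((Zmat A t)⁻¹ *ᵥ (X *ᵥ A j))) := by
        refine Finset.sum_congr rfl fun j _ => ?_
        rw [h1 j, ← dot_MX]
    _ = ∑ i, Real.exp (t i) * (v i * (A i ⬝ᵥ ((Zmat A t)⁻¹ *ᵥ (X *ᵥ A i)))) :=
        Finset.sum_congr rfl fun i _ => by ring

end Main
end BartheAux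

namespace BartheAux
variable {n d : ℕ}

section Main2
variable {A : Matrix (Fin n) (Fin d) ℝ} (t v : Fin n → ℝ)

/-- E2 : `∑ i e_i (X₀ a_i)ᵀ M (X₀ a_i)` equals the double sum in `bartheH`. -/
lemma E2 (hspan : Spans A) :
    ∑ i, Real.exp (t i) * ((Xopt A t v *ᵥ A i) ⬝ᵥ ((Zmat A t)⁻¹ *ᵥ (Xopt A t v *ᵥ A i)))
      = ∑ i, ∑ j, v i * v j * Real.exp (t i + t j) * (A i ⬝ᵥ ((Zmat A t)⁻¹ *ᵥ A j)) ^ 2 := by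
  have hG : ∀ j k, ∑ i, Real.exp (t i) *
      ((A i ⬝ᵥ ((Zmat A t)⁻¹ *ᵥ A j)) * (A i ⬝ᵥ ((Zmat A t)⁻¹ *ᵥ A k)))
      = A j ⬝ᵥ ((Zmat A t)⁻¹ *ᵥ A k) :=
    fun j k => contraction t hspan (A j) ((Zmat A t)⁻¹ *ᵥ A k)
  have hs : ∀ x y : Fin d → ℝ, x ⬝ᵥ ((Zmat A t)⁻¹ *ᵥ y) = y ⬝ᵥ ((Zmat A t)⁻¹ *ᵥ x) :=
    form_symm (zmat_inv_symm (A := A) t)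
  calc ∑ i, Real.exp (t i) * ((Xopt A t v *ᵥ A i) ⬝ᵥ ((Zmat A t)⁻¹ *ᵥ (Xopt A t v *ᵥ A i)))
      = ∑ i, ∑ j, ∑ k, (v j * Real.exp (t j)) * (v k * Real.exp (t k))
          * (A j ⬝ᵥ ((Zmat A t)⁻¹ *ᵥ A k))
          * (Real.exp (t i) * ((A i ⬝ᵥ ((Zmat A t)⁻¹ *ᵥ A j)) * (A i ⬝ᵥ ((Zmat A t)⁻¹ *ᵥ A k)))) := by
        refine Finset.sum_congr rfl fun i _ => ?_
        rw [xopt_dot t v (A i) (Xopt A t v *ᵥ A i)]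
        simp only [Finset.mul_sum]
        refine Finset.sum_congr rfl fun j _ => ?_
        rw [hs (A j) (Xopt A t v *ᵥ A i), xopt_dot t v (A i) (A j)]
        simp only [Finset.mul_sum]
        refine Finset.sum_congr rfl fun k _ => ?_
        rw [hs (A j) (A i), hs (A k) (A i), hs (A k) (A j)]
        ring
    _ = ∑ j, ∑ k, (v j * Real.exp (t j)) * (v k * Real.exp (t k))
          * (A j ⬝ᵥ ((Zmat A t)⁻¹ *ᵥ A k))
          * ∑ i, Real.exp (t i) * ((A i ⬝ᵥ ((Zmat A t)⁻¹ *ᵥ A j)) * (A i ⬝ᵥ ((Zmat A t)⁻¹ *ᵥ A k))) := by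
        rw [Finset.sum_comm]
        refine Finset.sum_congr rfl fun j _ => ?_
        rw [Finset.sum_comm]
        refine Finset.sum_congr rfl fun k _ => ?_
        rw [Finset.mul_sum]
    _ = ∑ i, ∑ j, v i * v j * Real.exp (t i + t j) * (A i ⬝ᵥ ((Zmat A t)⁻¹ *ᵥ A j)) ^ 2 := by
        refine Finset.sum_congr rfl fun j _ => Finset.sum_congr rfl fun k _ => ?_
        rw [hG j k, Real.exp_add]
        ring

/-- `φ_t(X) := ∑ i e^{t_i} ‖v_i a_i − X a_i‖²_{Z(t)⁻¹}`. -/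
noncomputable def phi (A : Matrix (Fin n) (Fin d) ℝ) (t v : Fin n → ℝ)
    (X : Matrix (Fin d) (Fin d) ℝ) : ℝ :=
  ∑ i, Real.exp (t i) *
    ((v i • A i - X *ᵥ A i) ⬝ᵥ ((Zmat A t)⁻¹ *ᵥ (v i • A i - X *ᵥ A i)))

/-- Key identity: `φ_t(X) = H(t)[v,v] + ∑ i e^{t_i} ‖(X−X₀) a_i‖²_{Z(t)⁻¹}`. -/
lemma key (hspan : Spans A) (X : Matrix (Fin d) (Fin d) ℝ) :
    phi A t v X = bartheH A t v
      + ∑ i, Real.exp (t i) *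
          (((X - Xopt A t v) *ᵥ A i) ⬝ᵥ ((Zmat A t)⁻¹ *ᵥ ((X - Xopt A t v) *ᵥ A i))) := by
  have hs : ∀ x y : Fin d → ℝ, x ⬝ᵥ ((Zmat A t)⁻¹ *ᵥ y) = y ⬝ᵥ ((Zmat A t)⁻¹ *ᵥ x) :=
    form_symm (zmat_inv_symm (A := A) t)
  have expand1 : ∀ i, (v i • A i - X *ᵥ A i) ⬝ᵥ ((Zmat A t)⁻¹ *ᵥ (v i • A i - X *ᵥ A i))
      = v i ^ 2 * (A i ⬝ᵥ ((Zmat A t)⁻¹ *ᵥ A i))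
        - 2 * (v i * (A i ⬝ᵥ ((Zmat A t)⁻¹ *ᵥ (X *ᵥ A i))))
        + (X *ᵥ A i) ⬝ᵥ ((Zmat A t)⁻¹ *ᵥ (X *ᵥ A i)) := by
    intro i
    simp only [mulVec_sub, mulVec_smul, sub_dotProduct, dotProduct_sub, smul_dotProduct,
      dotProduct_smul, smul_eq_mul]
    rw [hs (X *ᵥ A i) (A i)]
    ring
  have expand2 : ∀ i, ((X - Xopt A t v) *ᵥ A i) ⬝ᵥ ((Zmat A t)⁻¹ *ᵥ ((X - Xopt A t v) *ᵥ A i))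
      = (X *ᵥ A i) ⬝ᵥ ((Zmat A t)⁻¹ *ᵥ (X *ᵥ A i))
        - 2 * ((Xopt A t v *ᵥ A i) ⬝ᵥ ((Zmat A t)⁻¹ *ᵥ (X *ᵥ A i)))
        + (Xopt A t v *ᵥ A i) ⬝ᵥ ((Zmat A t)⁻¹ *ᵥ (Xopt A t v *ᵥ A i)) := by
    intro i
    simp only [sub_mulVec, mulVec_sub, sub_dotProduct, dotProduct_sub]
    rw [hs (X *ᵥ A i) (Xopt A t v *ᵥ A i)]
    ring
  have hsplit : phi A t v X
        - (∑ i, Real.exp (t i) *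
            (((X - Xopt A t v) *ᵥ A i) ⬝ᵥ ((Zmat A t)⁻¹ *ᵥ ((X - Xopt A t v) *ᵥ A i))))
      = (∑ i, v i ^ 2 * Real.exp (t i) * (A i ⬝ᵥ ((Zmat A t)⁻¹ *ᵥ A i)))
        - 2 * (∑ i, Real.exp (t i) * (v i * (A i ⬝ᵥ ((Zmat A t)⁻¹ *ᵥ (X *ᵥ A i)))))
        + (2 * (∑ i, Real.exp (t i) * ((Xopt A t v *ᵥ A i) ⬝ᵥ ((Zmat A t)⁻¹ *ᵥ (X *ᵥ A i))))
          - ∑ i, Real.exp (t i) *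
              ((Xopt A t v *ᵥ A i) ⬝ᵥ ((Zmat A t)⁻¹ *ᵥ (Xopt A t v *ᵥ A i)))) := by
    rw [phi, ← Finset.sum_sub_distrib, Finset.mul_sum, Finset.mul_sum,
      ← Finset.sum_sub_distrib, ← Finset.sum_sub_distrib, ← Finset.sum_add_distrib]
    refine Finset.sum_congr rfl fun i _ => ?_
    rw [expand1 i, expand2 i]
    ring
  have := hsplit
  rw [E1 t v hspan X, E2 t v hspan] at this
  have hfin : phi A t v X
      - (∑ i, Real.exp (t i) *
          (((X - Xopt A t v) *ᵥ A i) ⬝ᵥ ((Zmat A t)⁻¹ *ᵥ ((X - Xopt A t v) *ᵥ A i))))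
      = bartheH A t v := by
    rw [this, bartheH]
    ring
  linarith [hfin]

end Main2
end BartheAux

namespace BartheAux
variable {n d : ℕ}

/-- monotonicity of inverse quadratic forms, without square roots. -/
lemma inv_form_le {P Q : Matrix (Fin d) (Fin d) ℝ} (hP : P.PosDef) (hQ : Q.PosDef)
    (h : ∀ x, x ⬝ᵥ (P *ᵥ x) ≤ x ⬝ᵥ (Q *ᵥ x)) (x : Fin d → ℝ) :
    x ⬝ᵥ (Q⁻¹ *ᵥ x) ≤ x ⬝ᵥ (P⁻¹ *ᵥ x) := by
  have hPt : Pᵀ = P := by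
    ext i j
    have h0 := congrFun (congrFun hP.1 i) j
    simpa using h0
  set y := Q⁻¹ *ᵥ x with hy
  set z := P⁻¹ *ᵥ x with hz
  have hQy : Q *ᵥ y = x := by
    rw [hy, mulVec_mulVec, Matrix.mul_nonsing_inv _ hQ.det_pos.ne'.isUnit, one_mulVec]
  have hPz : P *ᵥ z = x := by
    rw [hz, mulVec_mulVec, Matrix.mul_nonsing_inv _ hP.det_pos.ne'.isUnit, one_mulVec]
  have h1 : x ⬝ᵥ (Q⁻¹ *ᵥ x) = y ⬝ᵥ x := dotProduct_comm _ _
  have h3 : x ⬝ᵥ (P⁻¹ *ᵥ x) = z ⬝ᵥ x := dotProduct_comm _ _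
  have psd : 0 ≤ (y - z) ⬝ᵥ (P *ᵥ (y - z)) := by
    have := hP.posSemidef.dotProduct_mulVec_nonneg (y - z)
    simpa using this
  have hyz : (y - z) ⬝ᵥ (P *ᵥ (y - z))
      = y ⬝ᵥ (P *ᵥ y) - 2 * (y ⬝ᵥ x) + z ⬝ᵥ x := by
    rw [mulVec_sub, sub_dotProduct, dotProduct_sub, dotProduct_sub,
      form_symm hPt z y, hPz]
    ring
  have hyQ : y ⬝ᵥ (Q *ᵥ y) = y ⬝ᵥ x := by rw [hQy]
  have hcmp := h y
  rw [hyQ] at hcmp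
  rw [h1, h3]
  linarith [hyz ▸ psd]

section Comp
variable {A : Matrix (Fin n) (Fin d) ℝ}

lemma zinv_comp (hspan : Spans A) {r : ℝ} (t t' : Fin n → ℝ)
    (h : ∀ i, |t i - t' i| ≤ r) (x : Fin d → ℝ) :
    x ⬝ᵥ ((Zmat A t)⁻¹ *ᵥ x) ≤ Real.exp r * (x ⬝ᵥ ((Zmat A t')⁻¹ *ᵥ x)) := by
  set P := Real.exp (-r) • Zmat A t' with hPdef
  have hPquad : ∀ w : Fin d → ℝ, w ⬝ᵥ (P *ᵥ w) = Real.exp (-r) * (w ⬝ᵥ (Zmat A t' *ᵥ w)) := by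
    intro w
    rw [hPdef, smul_mulVec, dotProduct_smul, smul_eq_mul]
  have hPd : P.PosDef := by
    refine posdef_of_symm ?_ fun w hw => ?_
    · rw [hPdef, transpose_smul, zmat_symm]
    · rw [hPquad w]
      have := (zmat_posdef hspan t').dotProduct_mulVec_pos hw
      simp only [star_trivial] at this
      exact mul_pos (Real.exp_pos _) this
  have hform : ∀ w : Fin d → ℝ, w ⬝ᵥ (P *ᵥ w) ≤ w ⬝ᵥ (Zmat A t *ᵥ w) := by
    intro w
    rw [hPquad w, zmat_quad, zmat_quad, Finset.mul_sum]
    refine Finset.sum_le_sum fun i _ => ?_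
    rw [← mul_assoc, ← Real.exp_add]
    refine mul_le_mul_of_nonneg_right (Real.exp_le_exp.mpr ?_) (sq_nonneg _)
    have := (abs_le.mp (h i)).1
    linarith
  have hPinv : P⁻¹ = Real.exp r • (Zmat A t')⁻¹ := by
    refine Matrix.inv_eq_left_inv ?_
    rw [hPdef, Matrix.smul_mul, Matrix.mul_smul, smul_smul, zmat_inv_mul t' hspan,
      ← Real.exp_add]
    simp
  have := inv_form_le hPd (zmat_posdef hspan t) hform x
  rwa [hPinv, smul_mulVec, dotProduct_smul, smul_eq_mul] at this

lemma one_sided (hspan : Spans A) {r : ℝ} (t t' v : Fin n → ℝ)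
    (h : ∀ i, |t i - t' i| ≤ r) :
    bartheH A t v ≤ Real.exp (2 * r) * bartheH A t' v := by
  set X := Xopt A t' v with hX
  have h1 : bartheH A t v ≤ phi A t v X := by
    have hkey := key t v hspan X
    have hnn : 0 ≤ ∑ i, Real.exp (t i) *
        (((X - Xopt A t v) *ᵥ A i) ⬝ᵥ ((Zmat A t)⁻¹ *ᵥ ((X - Xopt A t v) *ᵥ A i))) :=
      Finset.sum_nonneg fun i _ =>
        mul_nonneg (Real.exp_pos _).le (zmat_inv_psd t hspan _)
    linarith
  have h2 : phi A t v X ≤ Real.exp (2 * r) * phi A t' v X := by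
    rw [phi, phi, Finset.mul_sum]
    refine Finset.sum_le_sum fun i _ => ?_
    set w := v i • A i - X *ᵥ A i with hw
    have hq1 : 0 ≤ w ⬝ᵥ ((Zmat A t)⁻¹ *ᵥ w) := zmat_inv_psd t hspan w
    have hq2 : w ⬝ᵥ ((Zmat A t)⁻¹ *ᵥ w) ≤ Real.exp r * (w ⬝ᵥ ((Zmat A t')⁻¹ *ᵥ w)) :=
      zinv_comp hspan t t' h w
    have he : Real.exp (t i) ≤ Real.exp (r + t' i) :=
      Real.exp_le_exp.mpr (by have := (abs_le.mp (h i)).2; linarith)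
    calc Real.exp (t i) * (w ⬝ᵥ ((Zmat A t)⁻¹ *ᵥ w))
        ≤ Real.exp (r + t' i) * (Real.exp r * (w ⬝ᵥ ((Zmat A t')⁻¹ *ᵥ w))) :=
          mul_le_mul he hq2 hq1 (Real.exp_pos _).le
      _ = Real.exp (2 * r) * (Real.exp (t' i) * (w ⬝ᵥ ((Zmat A t')⁻¹ *ᵥ w))) := by
          rw [← mul_assoc, ← Real.exp_add, ← mul_assoc, ← Real.exp_add]
          ring_nf
  have h3 : phi A t' v X = bartheH A t' v := by
    rw [key t' v hspan X, hX, sub_self]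
    simp
  calc bartheH A t v ≤ phi A t v X := h1
    _ ≤ Real.exp (2 * r) * phi A t' v X := h2
    _ = Real.exp (2 * r) * bartheH A t' v := by rw [h3]

end Comp
end BartheAux

open BartheAux in
/-- Barthe's objective is `(r, 2r)`-Hessian stable with respect to
the `ℓ∞` norm. -/
theorem stmt_5 (n d : ℕ) (hn : 1 ≤ n) (hd : 1 ≤ d)
    (A : Matrix (Fin n) (Fin d) ℝ)
    (hspan : Submodule.span ℝ (Set.range fun i => A i) = ⊤)
    (r : ℝ) (hr : 0 < r) :
    ∀ t t' v : Fin n → ℝ, (∀ i, |t i - t' i| ≤ r) →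
      Real.exp (-(2 * r)) * bartheH A t' v ≤ bartheH A t v ∧
      bartheH A t v ≤ Real.exp (2 * r) * bartheH A t' v := by
  intro t t' v h
  have hspan' : Spans A := hspan
  constructor
  · have hrev := one_sided hspan' t' t v fun i => by rw [abs_sub_comm]; exact h i
    calc Real.exp (-(2 * r)) * bartheH A t' v
        ≤ Real.exp (-(2 * r)) * (Real.exp (2 * r) * bartheH A t v) :=
          mul_le_mul_of_nonneg_left hrev (Real.exp_pos _).le
      _ = bartheH A t v := by rw [← mul_assoc, ← Real.exp_add]; simp
  · exact one_sided hspan' t t' v h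
end

section
/- Let n, d ≥ 1, let A ∈ ℝ^{n×d} have rows a_1, …, a_n ∈ ℝ^d which span ℝ^d and are all nonzero, let c ∈ ℝ^n have all entries in (0, 1], and let ε ∈ (0, 1). If t ∈ ℝ^n satisfies f(t) ≤ f(t') + (ε²/2)·(min_{i∈[n]} c_i)² for every t' ∈ ℝ^n, then R := Z(t)^{−1/2} (the inverse of the positive-definite square root of Z(t)) satisfies exp(−ε)·I_d ⪯ Σ_{i=1}^n c_i·(R a_i)(R a_i)ᵀ/‖R a_i‖₂² ⪯ exp(ε)·I_d, i.e., R is a (c, ε)-Forster transform of A. -/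
open Matrix

namespace Stmt6Aux

lemma my_dot_sum {n d : ℕ} (v : Fin d → ℝ) (f : Fin n → Fin d → ℝ) :
    v ⬝ᵥ (∑ i, f i) = ∑ i, v ⬝ᵥ f i := by
  simp only [dotProduct, Finset.sum_apply, Finset.mul_sum]
  exact Finset.sum_comm

lemma my_sum_mulVec {n d : ℕ} (M : Fin n → Matrix (Fin d) (Fin d) ℝ) (v : Fin d → ℝ) :
    (∑ i, M i) *ᵥ v = ∑ i, M i *ᵥ v := by
  funext j
  simp only [mulVec, dotProduct, Matrix.sum_apply, Finset.sum_apply, Finset.sum_mul]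
  exact Finset.sum_comm

lemma myVecMulVec_mulVec {d : ℕ} (u v w : Fin d → ℝ) :
    (vecMulVec u v) *ᵥ w = (v ⬝ᵥ w) • u := by
  funext j
  simp only [vecMulVec_apply, mulVec, dotProduct, Pi.smul_apply, smul_eq_mul, Finset.sum_mul,
    Finset.mul_sum]
  exact Finset.sum_congr rfl fun k _ => by ring

lemma dot_sum_smul_vecMulVec {n d : ℕ} (e : Fin n → ℝ) (u : Fin n → Fin d → ℝ) (v : Fin d → ℝ) :
    v ⬝ᵥ ((∑ i, e i • vecMulVec (u i) (u i)) *ᵥ v) = ∑ i, e i * (u i ⬝ᵥ v) ^ 2 := by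
  rw [my_sum_mulVec, my_dot_sum]
  refine Finset.sum_congr rfl fun i _ => ?_
  rw [smul_mulVec, myVecMulVec_mulVec, smul_smul, dotProduct_smul]
  rw [dotProduct_comm]
  simp only [smul_eq_mul]; ring

lemma convex_exp_bound {s x : ℝ} (h0 : 0 ≤ x) (h1 : x ≤ 1) :
    Real.exp (s * x) ≤ 1 + (Real.exp s - 1) * x := by
  have h := convexOn_exp.2 (Set.mem_univ s) (Set.mem_univ (0:ℝ)) h0 (sub_nonneg.2 h1)
    (by ring : x + (1 - x) = 1)
  simp only [smul_eq_mul, mul_zero, add_zero, Real.exp_zero, mul_one] at h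
  calc Real.exp (s * x) = Real.exp (x * s) := by ring_nf
    _ ≤ x * Real.exp s + (1 - x) := h
    _ = 1 + (Real.exp s - 1) * x := by ring

lemma trace_eq_sum_eigs {d : ℕ} {P : Matrix (Fin d) (Fin d) ℝ} (hH : P.IsHermitian) :
    P.trace = ∑ i, hH.eigenvalues i := by
  simpa using hH.trace_eq_sum_eigenvalues

lemma logdet_le_trace_sub {d : ℕ} {P : Matrix (Fin d) (Fin d) ℝ} (hP : P.PosDef) :
    Real.log P.det ≤ P.trace - d := by
  have hH := hP.1
  have hev : ∀ i, 0 < hH.eigenvalues i := hP.eigenvalues_pos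
  have hdet : P.det = ∏ i, hH.eigenvalues i := by
    simpa using hH.det_eq_prod_eigenvalues
  rw [hdet, Real.log_prod (fun i _ => (hev i).ne'), trace_eq_sum_eigs hH]
  calc ∑ i, Real.log (hH.eigenvalues i) ≤ ∑ i : Fin d, (hH.eigenvalues i - 1) :=
        Finset.sum_le_sum fun i _ => Real.log_le_sub_one_of_pos (hev i)
    _ = (∑ i, hH.eigenvalues i) - d := by
        rw [Finset.sum_sub_distrib]; simp

lemma conj_vecMulVec {d : ℕ} {R : Matrix (Fin d) (Fin d) ℝ} (hH : R.IsHermitian)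
    (a : Fin d → ℝ) : R * vecMulVec a a * R = vecMulVec (R *ᵥ a) (R *ᵥ a) := by
  have hsym : ∀ p q, R p q = R q p := fun p q => by
    conv_lhs => rw [← hH]
    simp [conjTranspose_apply]
  ext i j
  simp only [mul_apply, vecMulVec_apply, mulVec, dotProduct, Finset.sum_mul, Finset.mul_sum]
  refine Finset.sum_congr rfl fun k _ => ?_
  refine Finset.sum_congr rfl fun l _ => ?_
  rw [hsym k j]; ring

lemma herm_sum_smul_vmv {n d : ℕ} (e : Fin n → ℝ) (u : Fin n → Fin d → ℝ) :
    (∑ i, e i • vecMulVec (u i) (u i)).IsHermitian := by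
  show _ = _
  ext i j
  simp only [conjTranspose_apply, Matrix.sum_apply, Matrix.smul_apply, vecMulVec_apply,
    smul_eq_mul, star_trivial]
  exact Finset.sum_congr rfl fun k _ => by ring

lemma trace_sum_smul_vmv {n d : ℕ} (e : Fin n → ℝ) (u : Fin n → Fin d → ℝ) :
    (∑ i, e i • vecMulVec (u i) (u i)).trace = ∑ i, e i * (u i ⬝ᵥ u i) := by
  rw [trace_sum]
  refine Finset.sum_congr rfl fun i _ => ?_
  rw [trace_smul]
  simp only [smul_eq_mul]
  simp [Matrix.trace, Matrix.diag, vecMulVec_apply, dotProduct]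

lemma dot_mulVec_symm {d : ℕ} {R : Matrix (Fin d) (Fin d) ℝ} (hH : R.IsHermitian)
    (a y : Fin d → ℝ) : (R *ᵥ a) ⬝ᵥ y = a ⬝ᵥ (R *ᵥ y) := by
  have hsym : ∀ p q, R p q = R q p := fun p q => by
    conv_lhs => rw [← hH]
    simp [conjTranspose_apply]
  simp only [dotProduct, mulVec, Finset.sum_mul, Finset.mul_sum]
  rw [Finset.sum_comm]
  refine Finset.sum_congr rfl fun k _ => ?_
  refine Finset.sum_congr rfl fun j _ => ?_
  rw [hsym k j]; ring

lemma dot_eq_zero_of_span {n d : ℕ} {a : Fin n → Fin d → ℝ}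
    (hspan : Submodule.span ℝ (Set.range a) = ⊤) {v : Fin d → ℝ}
    (h : ∀ i, a i ⬝ᵥ v = 0) : v = 0 := by
  have hf : ∀ w : Fin d → ℝ, w ⬝ᵥ v = 0 := by
    intro w
    have hw : w ∈ Submodule.span ℝ (Set.range a) := hspan ▸ Submodule.mem_top
    induction hw using Submodule.span_induction with
    | mem x hx => obtain ⟨i, rfl⟩ := hx; exact h i
    | zero => simp
    | add x y _ _ hx hy => simp [add_dotProduct, hx, hy]
    | smul r x _ hx => simp [smul_dotProduct, hx]
  exact dotProduct_self_eq_zero.mp (hf v)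

end Stmt6Aux

set_option maxHeartbeats 1600000 in
open Stmt6Aux in
/-- if `t` minimizes Barthe's objective to additive error
`(ε²/2)·(min_i c_i)²`, then `R := Z(t)^{-1/2}` (characterized as the positive-definite
matrix with `R Z(t) R = I`) is a `(c, ε)`-Forster transform of `A`. -/
theorem stmt_6 (n d : ℕ) (hn : 1 ≤ n) (hd : 1 ≤ d)
    (A : Matrix (Fin n) (Fin d) ℝ)
    (hspan : Submodule.span ℝ (Set.range fun i => A i) = ⊤)
    (hrows : ∀ i, A i ≠ 0)
    (c : Fin n → ℝ) (hc : ∀ i, 0 < c i ∧ c i ≤ 1)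
    (ε : ℝ) (hε0 : 0 < ε) (hε1 : ε < 1)
    (t : Fin n → ℝ)
    (hgap : ∀ t', barthe A c t ≤ barthe A c t' + ε ^ 2 * (⨅ i, c i) ^ 2 / 2)
    (R : Matrix (Fin d) (Fin d) ℝ) (hRpos : R.PosDef)
    (hRZ : R * Zmat A t * R = 1) :
    ((∑ i, (c i / ((R *ᵥ A i) ⬝ᵥ (R *ᵥ A i))) • vecMulVec (R *ᵥ A i) (R *ᵥ A i))
        - Real.exp (-ε) • (1 : Matrix (Fin d) (Fin d) ℝ)).PosSemidef ∧
    (Real.exp ε • (1 : Matrix (Fin d) (Fin d) ℝ)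
        - ∑ i, (c i / ((R *ᵥ A i) ⬝ᵥ (R *ᵥ A i))) • vecMulVec (R *ᵥ A i) (R *ᵥ A i)).PosSemidef := by
  have instn : Nonempty (Fin n) := ⟨⟨0, hn⟩⟩
  set u : Fin n → Fin d → ℝ := fun i => R *ᵥ A i with hu_def
  set nu : Fin n → ℝ := fun i => u i ⬝ᵥ u i with hnu_def
  set m : ℝ := ⨅ i, c i with hm_def
  set δ : ℝ := ε ^ 2 * m ^ 2 / 2 with hδ_def
  set M : Matrix (Fin d) (Fin d) ℝ :=
    ∑ i, (c i / nu i) • vecMulVec (u i) (u i) with hM_def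
  -- basic facts about m
  have hm_le : ∀ i, m ≤ c i := fun i => ciInf_le (Finite.bddBelow_range c) i
  have hm_pos : 0 < m := by
    obtain ⟨i0, hi0⟩ := Finite.exists_min c
    have : m = c i0 := le_antisymm (hm_le i0) (le_ciInf hi0)
    rw [this]; exact (hc i0).1
  have hm_one : m ≤ 1 := (hm_le ⟨0, hn⟩).trans (hc ⟨0, hn⟩).2
  have hδ_pos : 0 < δ := by positivity
  -- Z(t') is positive definite for every t'
  have zpos : ∀ t' : Fin n → ℝ, (Zmat A t').PosDef := by
    intro t'
    refine Matrix.PosDef.of_dotProduct_mulVec_pos (herm_sum_smul_vmv _ _) fun x hx => ?_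
    have hq : x ⬝ᵥ (Zmat A t' *ᵥ x) = ∑ i, Real.exp (t' i) * ((A i) ⬝ᵥ x) ^ 2 :=
      dot_sum_smul_vecMulVec _ _ _
    rw [star_trivial, hq]
    obtain ⟨i, hi⟩ : ∃ i, (A i) ⬝ᵥ x ≠ 0 := by
      by_contra hall
      push_neg at hall
      exact hx (dot_eq_zero_of_span hspan hall)
    refine Finset.sum_pos' (fun j _ => by positivity) ⟨i, Finset.mem_univ i, ?_⟩
    exact mul_pos (Real.exp_pos _) (sq_pos_of_ne_zero hi)
  -- conjugation formula
  have conjZ : ∀ t'' : Fin n → ℝ,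
      R * Zmat A t'' * R = ∑ i, Real.exp (t'' i) • vecMulVec (u i) (u i) := by
    intro t''
    unfold Zmat
    rw [Matrix.mul_sum, Matrix.sum_mul]
    refine Finset.sum_congr rfl fun i _ => ?_
    rw [mul_smul_comm, smul_mul_assoc, conj_vecMulVec hRpos.1]
  have hone : (∑ i, Real.exp (t i) • vecMulVec (u i) (u i)) = 1 := by
    rw [← conjZ t]; exact hRZ
  -- quadratic form of the identity
  have quadI : ∀ v : Fin d → ℝ, ∑ i, Real.exp (t i) * (u i ⬝ᵥ v) ^ 2 = v ⬝ᵥ v := by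
    intro v
    have := dot_sum_smul_vecMulVec (fun i => Real.exp (t i)) u v
    rw [hone] at this
    rw [← this, one_mulVec]
  -- nu is positive
  have nu_pos : ∀ i, 0 < nu i := by
    intro i
    have hni : u i ≠ 0 := by
      intro h0
      have := hRpos.dotProduct_mulVec_pos (hrows i)
      rw [star_trivial] at this
      rw [show R *ᵥ A i = u i from rfl, h0] at this
      simp at this
    have hnn : 0 ≤ nu i := by
      have : nu i = ∑ k, (u i k) ^ 2 := by
        simp [hnu_def, dotProduct, pow_two]
      rw [this]; positivity
    rcases hnn.lt_or_eq with h | h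
    · exact h
    · exact absurd (dotProduct_self_eq_zero.mp h.symm) hni
  set w : Fin n → ℝ := fun i => Real.exp (t i) * nu i with hw_def
  have w_pos : ∀ i, 0 < w i := fun i => mul_pos (Real.exp_pos _) (nu_pos i)
  have sumw : ∑ i, w i = (d : ℝ) := by
    have := congrArg Matrix.trace hone
    rw [trace_sum_smul_vmv] at this
    simpa [hw_def, hnu_def, Matrix.trace_one] using this
  have w_le_one : ∀ i, w i ≤ 1 := by
    intro i
    have hq := quadI (u i)
    have hterm : Real.exp (t i) * (u i ⬝ᵥ u i) ^ 2 ≤ ∑ j, Real.exp (t j) * (u j ⬝ᵥ u i) ^ 2 :=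
      Finset.single_le_sum (f := fun j => Real.exp (t j) * (u j ⬝ᵥ u i) ^ 2)
        (fun j _ => by positivity) (Finset.mem_univ i)
    rw [hq] at hterm
    have : w i * nu i ≤ nu i := by
      calc w i * nu i = Real.exp (t i) * (u i ⬝ᵥ u i) ^ 2 := by
            simp [hw_def, hnu_def]; ring
        _ ≤ nu i := hterm
    exact (mul_le_iff_le_one_left (nu_pos i)).mp (by linarith [this])
  -- determinant facts
  have hdetR : 0 < R.det := hRpos.det_pos
  have hdetZ : 0 < (Zmat A t).det := (zpos t).det_pos
  have hdetRZ : R.det * (Zmat A t).det * R.det = 1 := by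
    have := congrArg Matrix.det hRZ
    simpa [det_mul] using this
  -- the main bound for unit vectors
  have main : ∀ v : Fin d → ℝ, v ⬝ᵥ v = 1 →
      Real.exp (-ε) ≤ v ⬝ᵥ (M *ᵥ v) ∧ v ⬝ᵥ (M *ᵥ v) ≤ Real.exp ε := by
    intro v hv
    set x : Fin n → ℝ := fun i => (u i ⬝ᵥ v) ^ 2 / nu i with hx_def
    have hx0 : ∀ i, 0 ≤ x i := fun i => div_nonneg (sq_nonneg _) (nu_pos i).le
    have hx1 : ∀ i, x i ≤ 1 := by
      intro i
      rw [hx_def]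
      apply div_le_one_of_le₀ _ (nu_pos i).le
      have hcs := Finset.sum_mul_sq_le_sq_mul_sq Finset.univ (u i) v
      have h1 : (u i ⬝ᵥ v) ^ 2 = (∑ k, u i k * v k) ^ 2 := by simp [dotProduct]
      have h2 : nu i = ∑ k, (u i k) ^ 2 := by simp [hnu_def, dotProduct, pow_two]
      have h3 : (1:ℝ) = ∑ k, (v k) ^ 2 := by
        rw [← hv]; simp [dotProduct, pow_two]
      calc (u i ⬝ᵥ v) ^ 2 = (∑ k, u i k * v k) ^ 2 := h1
        _ ≤ (∑ k, (u i k) ^ 2) * ∑ k, (v k) ^ 2 := hcs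
        _ = nu i := by rw [← h2, ← h3, mul_one]
    have hxw : ∑ i, x i * w i = 1 := by
      have : ∀ i, x i * w i = Real.exp (t i) * (u i ⬝ᵥ v) ^ 2 := by
        intro i
        have hne := (nu_pos i).ne'
        rw [hx_def, hw_def]
        field_simp
      rw [Finset.sum_congr rfl fun i _ => this i, quadI v, hv]
    set q : ℝ := v ⬝ᵥ (M *ᵥ v) with hq_def
    have hq : q = ∑ i, c i * x i := by
      rw [hq_def, hM_def, dot_sum_smul_vecMulVec]
      refine Finset.sum_congr rfl fun i _ => ?_
      have hne := (nu_pos i).ne'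
      rw [hx_def]
      field_simp
    have hqm : m ≤ q := by
      rw [hq]
      calc m = m * ∑ i, x i * w i := by rw [hxw, mul_one]
        _ = ∑ i, m * (x i * w i) := by rw [Finset.mul_sum]
        _ ≤ ∑ i, c i * x i := by
            refine Finset.sum_le_sum fun i _ => ?_
            have h1 : m * (x i * w i) ≤ m * (x i * 1) := by
              apply mul_le_mul_of_nonneg_left _ hm_pos.le
              exact mul_le_mul_of_nonneg_left (w_le_one i) (hx0 i)
            have h2 : m * (x i * 1) ≤ c i * x i := by
              rw [mul_one]
              exact mul_le_mul_of_nonneg_right (hm_le i) (hx0 i)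
            linarith
    -- the key inequality for all s
    have key : ∀ s : ℝ, s * q ≤ Real.exp s - 1 + δ := by
      intro s
      set t' : Fin n → ℝ := t + s • x with ht'_def
      have ht'app : ∀ i, t' i = t i + s * x i := fun i => rfl
      -- log det bound
      have hPpos : (R * Zmat A t' * R).PosDef := by
        rw [conjZ t']
        refine Matrix.PosDef.of_dotProduct_mulVec_pos (herm_sum_smul_vmv _ _) fun y hy => ?_
        rw [star_trivial, dot_sum_smul_vecMulVec]
        have hz : R *ᵥ y ≠ 0 := by
          intro h0
          have hp := hRpos.dotProduct_mulVec_pos hy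
          rw [star_trivial, h0] at hp
          simp at hp
        obtain ⟨i, hi⟩ : ∃ i, (A i) ⬝ᵥ (R *ᵥ y) ≠ 0 := by
          by_contra hall
          push_neg at hall
          exact hz (dot_eq_zero_of_span hspan hall)
        have hui : u i ⬝ᵥ y ≠ 0 := by
          rwa [dot_mulVec_symm hRpos.1]
        refine Finset.sum_pos' (fun j _ => by positivity) ⟨i, Finset.mem_univ i, ?_⟩
        exact mul_pos (Real.exp_pos _) (sq_pos_of_ne_zero hui)
      have hdetP : (R * Zmat A t' * R).det = (Zmat A t').det / (Zmat A t).det := by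
        have hRR : R.det * R.det = ((Zmat A t).det)⁻¹ := by
          field_simp
          linear_combination hdetRZ
        rw [det_mul, det_mul, div_eq_mul_inv, ← hRR]
        ring
      have hlogP : Real.log (R * Zmat A t' * R).det
          = Real.log (Zmat A t').det - Real.log (Zmat A t).det := by
        rw [hdetP, Real.log_div ((zpos t').det_pos.ne') hdetZ.ne']
      have htraceP : (R * Zmat A t' * R).trace = ∑ i, Real.exp (s * x i) * w i := by
        rw [conjZ t', trace_sum_smul_vmv]
        refine Finset.sum_congr rfl fun i _ => ?_
        rw [ht'app, Real.exp_add, hw_def]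
        ring
      have htrace_le : (R * Zmat A t' * R).trace ≤ (d : ℝ) + (Real.exp s - 1) := by
        rw [htraceP]
        calc ∑ i, Real.exp (s * x i) * w i
            ≤ ∑ i, (1 + (Real.exp s - 1) * x i) * w i := by
              refine Finset.sum_le_sum fun i _ => ?_
              exact mul_le_mul_of_nonneg_right (convex_exp_bound (hx0 i) (hx1 i)) (w_pos i).le
          _ = (∑ i, w i) + (Real.exp s - 1) * ∑ i, x i * w i := by
              rw [Finset.mul_sum, ← Finset.sum_add_distrib]
              refine Finset.sum_congr rfl fun i _ => by ring
          _ = (d : ℝ) + (Real.exp s - 1) := by rw [sumw, hxw, mul_one]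
      have hlog_le : Real.log (Zmat A t').det - Real.log (Zmat A t).det
          ≤ Real.exp s - 1 := by
        rw [← hlogP]
        have := logdet_le_trace_sub hPpos
        linarith [htrace_le]
      -- assemble via barthe
      have hlin : ∑ i, c i * t' i = (∑ i, c i * t i) + s * ∑ i, c i * x i := by
        rw [Finset.mul_sum, ← Finset.sum_add_distrib]
        refine Finset.sum_congr rfl fun i _ => ?_
        rw [ht'app]; ring
      have hb' : barthe A c t' ≤ barthe A c t - s * q + (Real.exp s - 1) := by
        unfold barthe
        rw [hlin, hq]
        linarith [hlog_le]
      have := hgap t'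
      linarith
    -- endgame
    have hEε : Real.exp ε ≤ 1 + ε + ε^2/2 + ε^3 * (2/9) := by
      have h := Real.exp_bound' hε0.le hε1.le (n := 3) (by norm_num)
      have hsum : (∑ mm ∈ Finset.range 3, ε ^ mm / mm.factorial) = 1 + ε + ε^2/2 := by
        simp [Finset.sum_range_succ]
      rw [hsum] at h
      norm_num [Nat.factorial] at h
      nlinarith [h]
    have hup : q ≤ Real.exp ε := by
      have hk := key ε
      have hδle : δ ≤ ε^2/2 := by
        rw [hδ_def]
        have hm2 : m^2 ≤ 1 := by nlinarith
        have h9 : 0 ≤ ε^2*(1 - m^2) := mul_nonneg (sq_nonneg ε) (by linarith)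
        nlinarith [h9]
      have h3 : (1-ε) * Real.exp ε ≤ (1-ε) * (1 + ε + ε^2/2 + ε^3*(2/9)) :=
        mul_le_mul_of_nonneg_left hEε (by linarith)
      have h2 : Real.exp ε - 1 + ε^2/2 ≤ ε * Real.exp ε := by
        nlinarith [h3, pow_pos hε0 3, pow_pos hε0 4]
      have h4 : ε * q ≤ ε * Real.exp ε := by linarith
      exact le_of_mul_le_mul_left h4 hε0
    have hlo : Real.exp (-ε) ≤ q := by
      by_cases hm : Real.exp (-ε) ≤ m
      · linarith [hqm]
      · push_neg at hm
        set r : ℝ := ε * m with hr_def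
        have hr0 : 0 < r := mul_pos hε0 hm_pos
        have hr1 : r < 1 := by
          calc r = ε * m := rfl
            _ < 1 * 1 := by
                apply mul_lt_mul' hε1.le _ hm_pos.le one_pos
                calc m < Real.exp (-ε) := hm
                  _ ≤ 1 := Real.exp_le_one_iff.mpr (by linarith)
            _ = 1 := by norm_num
        have hδr : δ = r^2/2 := by rw [hδ_def, hr_def]; ring
        have hexp_r : Real.exp (-r) ≤ 1 - r + r^2/2 + r^3 * (2/9) := by
          have hb := Real.exp_bound (x := -r) (by rw [abs_of_nonpos (by linarith)]; linarith)
            (n := 3) (by norm_num)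
          have hsum : (∑ mm ∈ Finset.range 3, (-r) ^ mm / mm.factorial) = 1 - r + r^2/2 := by
            simp [Finset.sum_range_succ]
            ring
          rw [hsum, abs_of_nonpos (by linarith : -r ≤ 0)] at hb
          have := abs_sub_le_iff.mp hb
          have h1 := this.1
          norm_num [Nat.factorial] at h1 ⊢
          linarith
        have hk := key (-r)
        rw [hδr] at hk
        -- r * q ≥ 1 - exp(-r) - r^2/2 ≥ r - r^2 - (2/9) r^3
        have hq_lower : 1 - r - r^2 * (2/9) ≤ q := by
          have h1 : r * q ≥ 1 - Real.exp (-r) - r^2/2 := by linarith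
          have h2 : 1 - Real.exp (-r) - r^2/2 ≥ r - r^2 - r^3 * (2/9) := by linarith
          have h3 : r * (1 - r - r^2 * (2/9)) ≤ r * q := by
            calc r * (1 - r - r^2 * (2/9)) = r - r^2 - r^3 * (2/9) := by ring
              _ ≤ r * q := by linarith
          exact le_of_mul_le_mul_left h3 hr0
        -- now 1 - r - (2/9) r² ≥ exp(-ε)
        set E : ℝ := Real.exp (-ε) with hE_def
        have hE_pos : 0 < E := Real.exp_pos _
        have hE_one : E ≤ 1 := Real.exp_le_one_iff.mpr (by linarith)
        have hEmul : E * Real.exp ε = 1 := by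
          rw [hE_def, ← Real.exp_add]; simp
        have hquad : 1 + ε + ε^2/2 ≤ Real.exp ε := Real.quadratic_le_exp_of_nonneg hε0.le
        have hrE : r ≤ ε * E := by
          rw [hr_def]
          exact mul_le_mul_of_nonneg_left hm.le hε0.le
        have hfinal : E ≤ 1 - r - r^2 * (2/9) := by
          have h4 : E * (1+ε+ε^2/2) ≤ E * Real.exp ε :=
            mul_le_mul_of_nonneg_left hquad hE_pos.le
          have h7 : E + ε*E + ε^2/2*E ≤ 1 := by nlinarith [h4, hEmul]
          have h5 : r^2 ≤ (ε*E)^2 := by nlinarith [hrE, hr0]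
          have h6 : (ε*E)^2 ≤ ε^2*E := by nlinarith [hE_one, hE_pos, hε0]
          have h8 : (0:ℝ) ≤ ε^2*E := by positivity
          have h5t : r^2 ≤ ε^2*E := h5.trans h6
          linarith [hrE, h5t, h7, h8]
        linarith
    exact ⟨hlo, hup⟩
  -- from unit-vector bounds to all vectors
  have mainAll : ∀ y : Fin d → ℝ,
      Real.exp (-ε) * (y ⬝ᵥ y) ≤ y ⬝ᵥ (M *ᵥ y) ∧ y ⬝ᵥ (M *ᵥ y) ≤ Real.exp ε * (y ⬝ᵥ y) := by
    intro y
    by_cases hy : y = 0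
    · subst hy; simp
    · have hY : 0 < y ⬝ᵥ y := by
        have hnn : 0 ≤ y ⬝ᵥ y := by
          have : y ⬝ᵥ y = ∑ k, (y k)^2 := by simp [dotProduct, pow_two]
          rw [this]; positivity
        rcases hnn.lt_or_eq with h | h
        · exact h
        · exact absurd (dotProduct_self_eq_zero.mp h.symm) hy
      set Y : ℝ := y ⬝ᵥ y with hY_def
      set α : ℝ := (Real.sqrt Y)⁻¹ with hα_def
      have hsq : Real.sqrt Y ^ 2 = Y := Real.sq_sqrt hY.le
      have hsqpos : 0 < Real.sqrt Y := Real.sqrt_pos.mpr hY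
      set v : Fin d → ℝ := α • y with hv_def
      have hv : v ⬝ᵥ v = 1 := by
        rw [hv_def, smul_dotProduct, dotProduct_smul]
        simp only [smul_eq_mul]
        rw [hα_def]
        field_simp
        rw [hsq]
      obtain ⟨h1, h2⟩ := main v hv
      have hMv : v ⬝ᵥ (M *ᵥ v) = α^2 * (y ⬝ᵥ (M *ᵥ y)) := by
        rw [hv_def, mulVec_smul, smul_dotProduct, dotProduct_smul]
        simp only [smul_eq_mul]; ring
      have hα2 : α^2 = Y⁻¹ := by
        rw [hα_def]
        rw [← hsq]
        simp [pow_two]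
      rw [hMv, hα2] at h1 h2
      constructor
      · have h3 := mul_le_mul_of_nonneg_left h1 hY.le
        rw [← mul_assoc, mul_inv_cancel₀ hY.ne', one_mul] at h3
        linarith [h3]
      · have h3 := mul_le_mul_of_nonneg_left h2 hY.le
        rw [← mul_assoc, mul_inv_cancel₀ hY.ne', one_mul] at h3
        linarith [h3]
  -- assemble PosSemidef conclusions
  have hMH : M.IsHermitian := herm_sum_smul_vmv _ _
  have hsm : ∀ β : ℝ, (β • (1 : Matrix (Fin d) (Fin d) ℝ)).IsHermitian := by
    intro β
    show _ = _
    ext i j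
    simp only [conjTranspose_apply, Matrix.smul_apply, star_trivial, smul_eq_mul,
      Matrix.one_apply]
    by_cases h : i = j
    · subst h; simp
    · simp [h, Ne.symm h]
  constructor
  · refine posSemidef_iff_dotProduct_mulVec.mpr ⟨hMH.sub (hsm _), fun y => ?_⟩
    rw [star_trivial, sub_mulVec, dotProduct_sub, smul_mulVec, one_mulVec,
      dotProduct_smul]
    have h := (mainAll y).1
    simp only [smul_eq_mul]
    linarith
  · refine posSemidef_iff_dotProduct_mulVec.mpr ⟨(hsm _).sub hMH, fun y => ?_⟩
    rw [star_trivial, sub_mulVec, dotProduct_sub, smul_mulVec, one_mulVec,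
      dotProduct_smul]
    have h := (mainAll y).2
    simp only [smul_eq_mul]
    linarith
end

section
/- Let n ≥ 1 and equip ℝ^n with the ℓ∞ norm. Let F : ℝ^n → ℝ be convex and twice continuously differentiable, and suppose F is (1, 2)-Hessian stable: for all x, y ∈ ℝ^n with ‖x − y‖∞ ≤ 1 and all v ∈ ℝ^n, exp(−2)·D²F(y)[v,v] ≤ D²F(x)[v,v] ≤ exp(2)·D²F(y)[v,v], where D²F(x)[v,v] denotes the second derivative of F at x evaluated at (v,v). Let R ≥ 1/2, let t* ∈ ℝ^n satisfy ‖t*‖∞ ≤ R and F(t*) ≤ F(u) for all u ∈ ℝ^n, let α ≥ 1, let t ∈ ℝ^n satisfy ‖t‖∞ ≤ R, and let L̃ ∈ ℝ^{n×n} be symmetric with D²F(t)[v,v] ≤ vᵀL̃v ≤ α·D²F(t)[v,v] for all v ∈ ℝ^n. Define W := {w ∈ ℝ^n : ‖w‖∞ ≤ 1 and ‖t + w‖∞ ≤ R}, and suppose δ ∈ W satisfies ⟨∇F(t), δ⟩ + 4·δᵀL̃δ ≤ (1/2)·(⟨∇F(t), w⟩ + 4·wᵀL̃w) for every w ∈ W.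 Then F(t + δ) − F(t*) ≤ (1 − 1/(240·α·R))·(F(t) − F(t*)). -/
open Matrix

open Set

lemma taylor_lower_aux (f f' f'' : ℝ → ℝ)
    (hf : ∀ s, HasDerivAt f (f' s) s) (hf' : ∀ s, HasDerivAt f' (f'' s) s)
    (m : ℝ) (hm : ∀ s ∈ Set.Icc (0:ℝ) 1, m ≤ f'' s) :
    f 0 + f' 0 + m / 2 ≤ f 1 := by
  set k' : ℝ → ℝ := fun s => f' s - f' 0 - m * s with hk'def
  set k : ℝ → ℝ := fun s => f s - f 0 - s * f' 0 - m * s ^ 2 / 2 with hkdef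
  have hk' : ∀ s, HasDerivAt k' (f'' s - m) s := by
    intro s
    have := ((hf' s).sub_const (f' 0)).sub ((hasDerivAt_id s).const_mul m)
    simp at this; exact this
  have hk : ∀ s, HasDerivAt k (k' s) s := by
    intro s
    have h1 : HasDerivAt (fun x : ℝ => m * x ^ 2 / 2) (m * s) s := by
      have := ((hasDerivAt_pow 2 s).const_mul m).div_const 2
      refine this.congr_deriv ?_
      simp only [Nat.cast_ofNat, Nat.reduceSub, pow_one]; ring
    have := (((hf s).sub_const (f 0)).sub ((hasDerivAt_id s).mul_const (f' 0))).sub h1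
    simp at this; exact this
  have mono1 : MonotoneOn k' (Icc 0 1) := by
    apply monotoneOn_of_deriv_nonneg (convex_Icc 0 1)
    · exact fun x _ => (hk' x).continuousAt.continuousWithinAt
    · exact fun x _ => (hk' x).differentiableAt.differentiableWithinAt
    · intro x hx
      rw [(hk' x).deriv]
      rw [interior_Icc] at hx
      have := hm x ⟨hx.1.le, hx.2.le⟩
      linarith
  have k'nonneg : ∀ s ∈ Icc (0:ℝ) 1, 0 ≤ k' s := by
    intro s hs
    have h0 : k' 0 = 0 := by simp [k']
    have := mono1 (left_mem_Icc.2 zero_le_one) hs hs.1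
    rw [h0] at this; exact this
  have mono2 : MonotoneOn k (Icc 0 1) := by
    apply monotoneOn_of_deriv_nonneg (convex_Icc 0 1)
    · exact fun x _ => (hk x).continuousAt.continuousWithinAt
    · exact fun x _ => (hk x).differentiableAt.differentiableWithinAt
    · intro x hx
      rw [(hk x).deriv]
      rw [interior_Icc] at hx
      exact k'nonneg x ⟨hx.1.le, hx.2.le⟩
  have := mono2 (left_mem_Icc.2 zero_le_one) (right_mem_Icc.2 zero_le_one) zero_le_one
  simp only [k] at this
  norm_num at this
  linarith

lemma taylor_upper_aux (f f' f'' : ℝ → ℝ)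
    (hf : ∀ s, HasDerivAt f (f' s) s) (hf' : ∀ s, HasDerivAt f' (f'' s) s)
    (M : ℝ) (hM : ∀ s ∈ Set.Icc (0:ℝ) 1, f'' s ≤ M) :
    f 1 ≤ f 0 + f' 0 + M / 2 := by
  have := taylor_lower_aux (fun s => -f s) (fun s => -f' s) (fun s => -f'' s)
    (fun s => (hf s).neg) (fun s => (hf' s).neg) (-M)
    (fun s hs => by simpa using hM s hs)
  linarith

section chain
variable {E : Type*} [NormedAddCommGroup E] [NormedSpace ℝ E]

lemma line_deriv1 (F : E → ℝ) (hC2 : ContDiff ℝ 2 F) (t w : E) :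
    ∀ s : ℝ, HasDerivAt (fun s : ℝ => F (t + s • w)) (fderiv ℝ F (t + s • w) w) s := by
  intro s
  have hline : HasDerivAt (fun s : ℝ => t + s • w) w s := by
    simpa using ((hasDerivAt_id s).smul_const w).const_add t
  exact ((hC2.differentiable (by norm_num) (t + s • w)).hasFDerivAt).comp_hasDerivAt s hline

lemma line_deriv2 (F : E → ℝ) (hC2 : ContDiff ℝ 2 F) (t w : E) :
    ∀ s : ℝ, HasDerivAt (fun s : ℝ => fderiv ℝ F (t + s • w) w)
      (iteratedFDeriv ℝ 2 F (t + s • w) ![w, w]) s := by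
  intro s
  have hline : HasDerivAt (fun s : ℝ => t + s • w) w s := by
    simpa using ((hasDerivAt_id s).smul_const w).const_add t
  have hF' : ContDiff ℝ 1 (fderiv ℝ F) := hC2.fderiv_right (by norm_num)
  have e1 : HasFDerivAt (fderiv ℝ F) (fderiv ℝ (fderiv ℝ F) (t + s • w)) (t + s • w) :=
    (hF'.differentiable one_ne_zero (t + s • w)).hasFDerivAt
  have e2 := (ContinuousLinearMap.apply ℝ ℝ w).hasFDerivAt.comp (t + s • w) e1
  have e3 := e2.comp_hasDerivAt s hline
  rw [iteratedFDeriv_two_apply]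
  simp at e3 ⊢; exact e3

end chain

set_option maxHeartbeats 4000000 in
/-- one step of the box-constrained Newton's method. Here
`Fin n → ℝ` carries the `ℓ∞` (sup) norm, `fderiv ℝ F t w` is the directional
derivative `⟨∇F(t), w⟩`, and `iteratedFDeriv ℝ 2 F x ![v, v]` is the Hessian
quadratic form `D²F(x)[v,v]`. -/
theorem stmt_8 (n : ℕ) (hn : 1 ≤ n)
    (F : (Fin n → ℝ) → ℝ)
    (hconv : ConvexOn ℝ Set.univ F)
    (hC2 : ContDiff ℝ 2 F)
    (hstable : ∀ x y : Fin n → ℝ, ‖x - y‖ ≤ 1 → ∀ v : Fin n → ℝ,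
      Real.exp (-2) * iteratedFDeriv ℝ 2 F y ![v, v] ≤ iteratedFDeriv ℝ 2 F x ![v, v] ∧
      iteratedFDeriv ℝ 2 F x ![v, v] ≤ Real.exp 2 * iteratedFDeriv ℝ 2 F y ![v, v])
    (R : ℝ) (hR : 1 / 2 ≤ R)
    (tstar : Fin n → ℝ) (htstar : ‖tstar‖ ≤ R) (hmin : ∀ u, F tstar ≤ F u)
    (α : ℝ) (hα : 1 ≤ α)
    (t : Fin n → ℝ) (ht : ‖t‖ ≤ R)
    (L : Matrix (Fin n) (Fin n) ℝ) (hL : L.IsSymm)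
    (hLbound : ∀ v : Fin n → ℝ,
      iteratedFDeriv ℝ 2 F t ![v, v] ≤ v ⬝ᵥ (L *ᵥ v) ∧
      v ⬝ᵥ (L *ᵥ v) ≤ α * iteratedFDeriv ℝ 2 F t ![v, v])
    (δ : Fin n → ℝ) (hδ1 : ‖δ‖ ≤ 1) (hδ2 : ‖t + δ‖ ≤ R)
    (hstep : ∀ w : Fin n → ℝ, ‖w‖ ≤ 1 → ‖t + w‖ ≤ R →
      fderiv ℝ F t δ + 4 * (δ ⬝ᵥ (L *ᵥ δ)) ≤
        1 / 2 * (fderiv ℝ F t w + 4 * (w ⬝ᵥ (L *ᵥ w)))) :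
    F (t + δ) - F tstar ≤ (1 - 1 / (240 * α * R)) * (F t - F tstar) := by
  have hR0 : (0:ℝ) < R := by linarith
  have hα0 : (0:ℝ) < α := by linarith
  have hE2 : Real.exp 2 = Real.exp 1 * Real.exp 1 := by
    rw [← Real.exp_add]; norm_num
  have hexp1lt : Real.exp 1 < 2.7182818286 := Real.exp_one_lt_d9
  have hexp1gt : 2.7182818283 < Real.exp 1 := Real.exp_one_gt_d9
  have hE2pos : (0:ℝ) < Real.exp 2 := Real.exp_pos 2
  have hE2lt : Real.exp 2 < 7.5 := by rw [hE2]; nlinarith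
  have hE2gt : (1:ℝ) < Real.exp 2 := by rw [hE2]; nlinarith
  have hEm2 : Real.exp (-2) = 1 / Real.exp 2 := by
    rw [Real.exp_neg]; rw [inv_eq_one_div]
  have hEm2pos : (0:ℝ) < Real.exp (-2) := Real.exp_pos _
  have hEm2gt : 2/15 < Real.exp (-2) := by
    rw [hEm2, lt_div_iff₀ hE2pos]; nlinarith
  set Em2 := Real.exp (-2) with hEm2def
  set E2 := Real.exp 2 with hE2def
  -- parameters
  set γ₀ : ℝ := 1 / (2 * R) with hγ₀def
  set c : ℝ := Em2 / (8 * α) with hcdef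
  have hγ₀pos : 0 < γ₀ := by positivity
  have hγ₀le1 : γ₀ ≤ 1 := by
    rw [hγ₀def, div_le_one (by linarith)]; linarith
  have hcpos : 0 < c := by positivity
  have hcle1 : c ≤ 1 := by
    rw [hcdef, div_le_one (by linarith)]
    calc Em2 ≤ 1 := by rw [hEm2, div_le_one hE2pos]; linarith
    _ ≤ 8 * α := by linarith
  set d : Fin n → ℝ := tstar - t with hddef
  set w₀ : Fin n → ℝ := γ₀ • d with hw₀def
  have hnd : ‖d‖ ≤ 2 * R := by
    calc ‖d‖ ≤ ‖tstar‖ + ‖t‖ := norm_sub_le _ _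
    _ ≤ 2 * R := by linarith
  have hnw₀ : ‖w₀‖ ≤ 1 := by
    rw [hw₀def, norm_smul]
    have : ‖γ₀‖ = γ₀ := Real.norm_of_nonneg hγ₀pos.le
    rw [this, hγ₀def]
    rw [div_mul_eq_mul_div, div_le_one (by linarith)]
    linarith
  -- convex combination identity
  have hcomb : ∀ s : ℝ, t + s • d = (1 - s) • t + s • tstar := by
    intro s; rw [hddef]; module
  -- Hessian quadratic forms at t
  set H₀ : ℝ := iteratedFDeriv ℝ 2 F t ![w₀, w₀] with hH₀def
  set Hδ : ℝ := iteratedFDeriv ℝ 2 F t ![δ, δ] with hHδdef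
  have hHδnn : 0 ≤ Hδ := by
    have := (hstable t t (by simp) δ).2
    nlinarith
  -- Taylor lower bound along w₀
  have lowB : F t + fderiv ℝ F t w₀ + (Em2 * H₀) / 2 ≤ F (t + w₀) := by
    have := taylor_lower_aux (fun s : ℝ => F (t + s • w₀))
      (fun s : ℝ => fderiv ℝ F (t + s • w₀) w₀)
      (fun s : ℝ => iteratedFDeriv ℝ 2 F (t + s • w₀) ![w₀, w₀])
      (line_deriv1 F hC2 t w₀) (line_deriv2 F hC2 t w₀) (Em2 * H₀) ?_
    · simpa using this
    · intro s hs
      have hdist : ‖(t + s • w₀) - t‖ ≤ 1 := by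
        rw [add_sub_cancel_left, norm_smul]
        have : ‖s‖ = s := Real.norm_of_nonneg hs.1
        rw [this]
        nlinarith [hs.2, norm_nonneg w₀]
      exact (hstable (t + s • w₀) t hdist w₀).1
  -- Taylor upper bound along δ
  have upB : F (t + δ) ≤ F t + fderiv ℝ F t δ + (E2 * Hδ) / 2 := by
    have := taylor_upper_aux (fun s : ℝ => F (t + s • δ))
      (fun s : ℝ => fderiv ℝ F (t + s • δ) δ)
      (fun s : ℝ => iteratedFDeriv ℝ 2 F (t + s • δ) ![δ, δ])
      (line_deriv1 F hC2 t δ) (line_deriv2 F hC2 t δ) (E2 * Hδ) ?_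
    · simpa using this
    · intro s hs
      have hdist : ‖(t + s • δ) - t‖ ≤ 1 := by
        rw [add_sub_cancel_left, norm_smul]
        have : ‖s‖ = s := Real.norm_of_nonneg hs.1
        rw [this]
        nlinarith [hs.2, norm_nonneg δ]
      exact (hstable (t + s • δ) t hdist δ).2
  -- convexity bound
  have hconvb : F (t + w₀) ≤ (1 - γ₀) * F t + γ₀ * F tstar := by
    have := hconv.2 (Set.mem_univ t) (Set.mem_univ tstar)
      (by linarith : (0:ℝ) ≤ 1 - γ₀) hγ₀pos.le (by ring)
    simp only [smul_eq_mul] at this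
    rw [hw₀def, hcomb γ₀]
    exact this
  -- key1
  have hΔ : 0 ≤ F t - F tstar := by have := hmin t; linarith
  have key1 : fderiv ℝ F t w₀ + Em2 / 2 * H₀ ≤ γ₀ * (F tstar - F t) := by
    nlinarith [lowB, hconvb]
  -- step candidate u
  set u : Fin n → ℝ := c • w₀ with hudef
  have hnu : ‖u‖ ≤ 1 := by
    rw [hudef, norm_smul]
    have h1 : ‖c‖ = c := Real.norm_of_nonneg hcpos.le
    rw [h1]
    nlinarith [norm_nonneg w₀]
  have hntu : ‖t + u‖ ≤ R := by
    have hcγ : 0 ≤ c * γ₀ := by positivity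
    have hcγ1 : c * γ₀ ≤ 1 := by nlinarith
    have heq : t + u = (1 - c * γ₀) • t + (c * γ₀) • tstar := by
      rw [hudef, hw₀def, smul_smul]
      exact hcomb (c * γ₀)
    rw [heq]
    calc ‖(1 - c * γ₀) • t + (c * γ₀) • tstar‖
        ≤ ‖(1 - c * γ₀) • t‖ + ‖(c * γ₀) • tstar‖ := norm_add_le _ _
      _ = (1 - c * γ₀) * ‖t‖ + (c * γ₀) * ‖tstar‖ := by
          rw [norm_smul, norm_smul, Real.norm_of_nonneg (by linarith), Real.norm_of_nonneg hcγ]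
      _ ≤ (1 - c * γ₀) * R + (c * γ₀) * R := by
          nlinarith [mul_le_mul_of_nonneg_left ht (by linarith : (0:ℝ) ≤ 1 - c * γ₀),
            mul_le_mul_of_nonneg_left htstar hcγ]
      _ = R := by ring
  -- evaluate Q(u)
  have hfu : fderiv ℝ F t u = c * fderiv ℝ F t w₀ := by
    rw [hudef, (fderiv ℝ F t).map_smul, smul_eq_mul]
  have hqu : u ⬝ᵥ (L *ᵥ u) = c ^ 2 * (w₀ ⬝ᵥ (L *ᵥ w₀)) := by
    rw [hudef, Matrix.mulVec_smul, smul_dotProduct, dotProduct_smul,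
      smul_eq_mul, smul_eq_mul]
    ring
  have hLw : w₀ ⬝ᵥ (L *ᵥ w₀) ≤ α * H₀ := (hLbound w₀).2
  have hLδ : Hδ ≤ δ ⬝ᵥ (L *ᵥ δ) := (hLbound δ).1
  have hc4 : 4 * c * α = Em2 / 2 := by
    rw [hcdef]; field_simp; ring
  -- Q(u) ≤ c * γ₀ * (F* - F t)
  have hQu : fderiv ℝ F t u + 4 * (u ⬝ᵥ (L *ᵥ u)) ≤ c * (γ₀ * (F tstar - F t)) := by
    rw [hfu, hqu]
    have h1 : 4 * (c ^ 2 * (w₀ ⬝ᵥ (L *ᵥ w₀))) ≤ 4 * (c ^ 2 * (α * H₀)) := by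
      nlinarith [sq_nonneg c]
    have h2 : c * fderiv ℝ F t w₀ + 4 * (c ^ 2 * (α * H₀))
        = c * (fderiv ℝ F t w₀ + Em2 / 2 * H₀) := by
      have : 4 * (c ^ 2 * (α * H₀)) = c * ((4 * c * α) * H₀) := by ring
      rw [this, hc4]; ring
    have h3 : c * (fderiv ℝ F t w₀ + Em2 / 2 * H₀) ≤ c * (γ₀ * (F tstar - F t)) :=
      mul_le_mul_of_nonneg_left key1 hcpos.le
    linarith
  -- step inequality
  have hstepu := hstep u hnu hntu
  have hδQ : fderiv ℝ F t δ + 4 * (δ ⬝ᵥ (L *ᵥ δ)) ≤ 1 / 2 * (c * (γ₀ * (F tstar - F t))) := by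
    calc fderiv ℝ F t δ + 4 * (δ ⬝ᵥ (L *ᵥ δ))
        ≤ 1 / 2 * (fderiv ℝ F t u + 4 * (u ⬝ᵥ (L *ᵥ u))) := hstepu
      _ ≤ 1 / 2 * (c * (γ₀ * (F tstar - F t))) := by linarith
  -- final upper bound on F (t + δ)
  have hup2 : F (t + δ) ≤ F t + 1 / 2 * (c * (γ₀ * (F tstar - F t))) := by
    have h1 : E2 * Hδ / 2 ≤ 4 * Hδ := by nlinarith
    have h2 : (4:ℝ) * Hδ ≤ 4 * (δ ⬝ᵥ (L *ᵥ δ)) := by linarith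
    linarith
  -- conclusion
  have hfrac : 1 / (240 * α * R) ≤ c * γ₀ / 2 := by
    have h : c * γ₀ / 2 = Em2 / (32 * α * R) := by
      rw [hcdef, hγ₀def]; field_simp; ring_nf
    rw [h, div_le_div_iff₀ (by positivity) (by positivity)]
    nlinarith [mul_pos hα0 hR0]
  have hmul := mul_le_mul_of_nonneg_right hfrac hΔ
  have hup3 : F (t + δ) ≤ F t - c * γ₀ / 2 * (F t - F tstar) := by linarith [hup2]
  have expand : (1 - 1 / (240 * α * R)) * (F t - F tstar)
      = (F t - F tstar) - (1 / (240 * α * R)) * (F t - F tstar) := by ring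
  linarith [hmul, hup3]
end

section
/- Let p be a natural number with p ≥ 2, let α ≥ 0 be a real number, and let M be a real symmetric positive semidefinite n×n matrix with M ⪯ α·I_n. Then (I_n + M)^p ⪯ I_n + p·(1 + α)^{p−1}·M. -/
open Matrix

section aux

variable {n : ℕ}

lemma psd_smul {A : Matrix (Fin n) (Fin n) ℝ} (hA : A.PosSemidef) {c : ℝ} (hc : 0 ≤ c) :
    (c • A).PosSemidef := by
  refine ⟨?_, fun x => ?_⟩
  · unfold Matrix.IsHermitian
    rw [conjTranspose_smul, hA.1.eq]
    simp
  · exact (hA.smul hc).2 x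

section sqrtaux

open scoped MatrixOrder

lemma psd_exists_sqrt {A : Matrix (Fin n) (Fin n) ℝ} (hA : A.PosSemidef) :
    ∃ T : Matrix (Fin n) (Fin n) ℝ, T.PosSemidef ∧ T * T = A :=
  ⟨CFC.sqrt A, (CFC.sqrt_nonneg A).posSemidef, CFC.sqrt_mul_sqrt_self A hA.nonneg⟩

end sqrtaux

lemma psd_sq_mul {S C : Matrix (Fin n) (Fin n) ℝ} (hS : S.IsHermitian) (hC : C.PosSemidef)
    (h : Commute S C) : (S * S * C).PosSemidef := by
  have key : S * S * C = S * C * Sᴴ := by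
    rw [hS.eq, mul_assoc, mul_assoc, h.eq]
  rw [key]
  exact hC.mul_mul_conjTranspose_same S

/-- `(α•1 - M) * (1+M)^k` is PSD. -/
lemma psd_prod {α : ℝ} (hα : 0 ≤ α) {M : Matrix (Fin n) (Fin n) ℝ} (hM : M.PosSemidef)
    (hMα : (α • (1 : Matrix (Fin n) (Fin n) ℝ) - M).PosSemidef) (k : ℕ) :
    ((α • (1 : Matrix (Fin n) (Fin n) ℝ) - M) * (1 + M) ^ k).PosSemidef := by
  have hB : (1 + M).PosSemidef := by simpa using Matrix.PosSemidef.add Matrix.PosSemidef.one hM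
  obtain ⟨T, hTpsd, hT2⟩ := psd_exists_sqrt hB
  have hTone : Commute T (1 + M) := by
    rw [← hT2]; exact (Commute.refl T).mul_right (Commute.refl T)
  have hTM : Commute T M := by
    have := hTone.sub_right (Commute.one_right T)
    simpa using this
  have hTC : Commute T (α • (1 : Matrix (Fin n) (Fin n) ℝ) - M) :=
    ((Commute.one_right T).smul_right α).sub_right hTM
  have hTk : Commute (T ^ k) (α • (1 : Matrix (Fin n) (Fin n) ℝ) - M) := hTC.pow_left k
  have hTherm : (T ^ k).IsHermitian := hTpsd.1.pow k
  have hCM : Commute (α • (1 : Matrix (Fin n) (Fin n) ℝ) - M) M :=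
    ((Commute.one_left M).smul_left α).sub_left (Commute.refl M)
  have hCB : Commute (α • (1 : Matrix (Fin n) (Fin n) ℝ) - M) (1 + M) :=
    (Commute.one_right _).add_right hCM
  have key : (α • (1 : Matrix (Fin n) (Fin n) ℝ) - M) * (1 + M) ^ k
      = T ^ k * T ^ k * (α • (1 : Matrix (Fin n) (Fin n) ℝ) - M) := by
    rw [(hCB.pow_right k).eq, ← hT2, (Commute.refl T).mul_pow k]
  rw [key]
  exact psd_sq_mul hTherm hMα hTk

end aux

/-- `(1+α)^k • 1 - (1+M)^k` is PSD. -/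
lemma psd_pow_bound {α : ℝ} (hα : 0 ≤ α) {M : Matrix (Fin n) (Fin n) ℝ} (hM : M.PosSemidef)
    (hMα : (α • (1 : Matrix (Fin n) (Fin n) ℝ) - M).PosSemidef) (k : ℕ) :
    (((1 + α) ^ k) • (1 : Matrix (Fin n) (Fin n) ℝ) - (1 + M) ^ k).PosSemidef := by
  induction k with
  | zero => simpa using Matrix.PosSemidef.zero
  | succ k ih =>
    have key : ((1 + α) ^ (k+1)) • (1 : Matrix (Fin n) (Fin n) ℝ) - (1 + M) ^ (k+1)
        = (1 + α) • (((1 + α) ^ k) • (1 : Matrix (Fin n) (Fin n) ℝ) - (1 + M) ^ k)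
          + (α • (1 : Matrix (Fin n) (Fin n) ℝ) - M) * (1 + M) ^ k := by
      rw [pow_succ' (1 + M) k, add_mul, one_mul, sub_mul, smul_mul_assoc, one_mul]
      module
    rw [key]
    exact (psd_smul ih (by linarith)).add (psd_prod hα hM hMα k)

/-- if `0 ⪯ M ⪯ α·I`, then `(I + M)^p ⪯ I + p(1+α)^{p-1}·M`. -/
theorem stmt_11 (n : ℕ) (p : ℕ) (hp : 2 ≤ p) (α : ℝ) (hα : 0 ≤ α)
    (M : Matrix (Fin n) (Fin n) ℝ) (hM : M.PosSemidef)
    (hMα : (α • (1 : Matrix (Fin n) (Fin n) ℝ) - M).PosSemidef) :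
    ((1 + ((p : ℝ) * (1 + α) ^ (p - 1)) • M) - (1 + M) ^ p).PosSemidef := by
  set c : ℝ := (p : ℝ) * (1 + α) ^ (p - 1) with hc
  set Q : Matrix (Fin n) (Fin n) ℝ :=
    c • 1 - ∑ k ∈ Finset.range p, (1 + M) ^ k with hQdef
  -- Q is PSD
  have hQ : Q.PosSemidef := by
    have hsplit : Q = ∑ k ∈ Finset.range p,
        (((1 + α) ^ (p - 1)) • (1 : Matrix (Fin n) (Fin n) ℝ) - (1 + M) ^ k) := by
      rw [hQdef, Finset.sum_sub_distrib, Finset.sum_const, Finset.card_range,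
        hc, mul_smul, Nat.cast_smul_eq_nsmul]
    rw [hsplit]
    refine Finset.sum_induction _ Matrix.PosSemidef
      (fun a b ha hb => ha.add hb) Matrix.PosSemidef.zero (fun k hk => ?_)
    have hk' : k ≤ p - 1 := Nat.le_sub_one_of_lt (Finset.mem_range.mp hk)
    have hle : (1 + α) ^ k ≤ (1 + α) ^ (p - 1) :=
      pow_le_pow_right₀ (by linarith) hk'
    have : ((1 + α) ^ (p - 1)) • (1 : Matrix (Fin n) (Fin n) ℝ) - (1 + M) ^ k
        = ((1 + α) ^ (p - 1) - (1 + α) ^ k) • (1 : Matrix (Fin n) (Fin n) ℝ)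
          + (((1 + α) ^ k) • (1 : Matrix (Fin n) (Fin n) ℝ) - (1 + M) ^ k) := by
      module
    rw [this]
    exact (psd_smul Matrix.PosSemidef.one (by linarith)).add (psd_pow_bound hα hM hMα k)
  -- express goal as S * S * Q
  obtain ⟨S, hSpsd, hS2⟩ := psd_exists_sqrt hM
  have hSM : Commute S M := by
    rw [← hS2]; exact (Commute.refl S).mul_right (Commute.refl S)
  have hSB : Commute S (1 + M) := (Commute.one_right S).add_right hSM
  have hSQ : Commute S Q := by
    refine (((Commute.one_right S).smul_right c).sub_right ?_)
    exact Finset.sum_induction _ (Commute S) (fun a b => Commute.add_right)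
      (Commute.zero_right S) (fun k _ => hSB.pow_right k)
  have hgeom : M * ∑ k ∈ Finset.range p, (1 + M) ^ k = (1 + M) ^ p - 1 := by
    have := mul_geom_sum (1 + M) p
    simpa using this
  have key : (1 + c • M) - (1 + M) ^ p = S * S * Q := by
    rw [hS2, hQdef, mul_sub, hgeom, mul_smul_comm, mul_one]
    abel
  rw [key]
  exact psd_sq_mul hSpsd.1 hQ hSQ
end

section
/- Let ℓ ≥ 1 and let n_1, …, n_ℓ be natural numbers with Z := Σ_{i=1}^ℓ n_i. If 3·n_i ≤ Z for every i ∈ [ℓ], then there exists a subset S ⊆ [ℓ] such that Z ≤ 3·Σ_{i∈S} n_i and 3·Σ_{i∈S} n_i ≤ 2·Z. -/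
/-- balanced partitioning of integers. If no `n_i` exceeds `Z/3`
where `Z = ∑ n_i`, then some subset has sum in `[Z/3, 2Z/3]`. -/
theorem stmt_13 (ℓ : ℕ) (hℓ : 1 ≤ ℓ) (a : Fin ℓ → ℕ)
    (h : ∀ i, 3 * a i ≤ ∑ j, a j) :
    ∃ S : Finset (Fin ℓ),
      (∑ j, a j) ≤ 3 * ∑ i ∈ S, a i ∧ 3 * ∑ i ∈ S, a i ≤ 2 * ∑ j, a j := by
  set Z := ∑ j, a j with hZ
  rcases Nat.eq_zero_or_pos Z with h0 | hpos
  · exact ⟨∅, by simp [h0]⟩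
  · set T : Finset (Finset (Fin ℓ)) :=
      Finset.univ.filter (fun S => 3 * ∑ i ∈ S, a i ≤ 2 * Z) with hT
    have hne : T.Nonempty := ⟨∅, by simp [hT]⟩
    obtain ⟨S, hST, hmax⟩ := T.exists_max_image (fun S => ∑ i ∈ S, a i) hne
    have hS2 : 3 * ∑ i ∈ S, a i ≤ 2 * Z := by
      simpa [hT] using hST
    refine ⟨S, ?_, hS2⟩
    by_contra hlt
    push_neg at hlt
    have hsplit : ∑ i ∈ S, a i + ∑ i ∈ Sᶜ, a i = Z := by
      rw [hZ]
      exact Finset.sum_add_sum_compl S a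
    have hcpos : 0 < ∑ i ∈ Sᶜ, a i := by omega
    obtain ⟨i, hiSc, hai⟩ : ∃ i ∈ Sᶜ, 0 < a i := by
      by_contra hc
      push_neg at hc
      have : ∑ i ∈ Sᶜ, a i = 0 :=
        Finset.sum_eq_zero fun i hi => Nat.le_zero.mp (hc i hi)
      omega
    have hi : i ∉ S := Finset.mem_compl.mp hiSc
    have hins : 3 * ∑ j ∈ insert i S, a j ≤ 2 * Z := by
      rw [Finset.sum_insert hi]
      have := h i
      omega
    have hmem : insert i S ∈ T := by simp [hT, hins]
    have := hmax _ hmem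
    rw [Finset.sum_insert hi] at this
    omega
end

section
/- Let k ≥ 1, let ρ > 0, and let x, y ∈ ℝ^k. Let s be a random vector distributed uniformly on [0, ρ)^k (the product over [k] of the uniform probability measure on the interval [0, ρ)). Then the probability that there exists i ∈ [k] with ⌊(x_i + s_i)/ρ⌋ ≠ ⌊(y_i + s_i)/ρ⌋ is at most (2·√k/ρ)·‖x − y‖₂. -/
open MeasureTheory ProbabilityTheory Set

private lemma floor_ne_subset (ρ a b : ℝ) (hρ : 0 < ρ) (hab : a ≤ b) (hba : b - a < ρ) :
    {s : ℝ | ⌊(a + s) / ρ⌋ ≠ ⌊(b + s) / ρ⌋} ∩ Ico 0 ρ ⊆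
      Ico ((⌊a/ρ⌋+1)*ρ - b) ((⌊a/ρ⌋+1)*ρ - a) ∪ Ico ((⌊a/ρ⌋+2)*ρ - b) ((⌊a/ρ⌋+2)*ρ - a) := by
  rintro s ⟨hne, hs0, hsρ⟩
  have hle : ⌊(a + s) / ρ⌋ ≤ ⌊(b + s) / ρ⌋ :=
    Int.floor_le_floor (by gcongr)
  have hlt : ⌊(a + s) / ρ⌋ < ⌊(b + s) / ρ⌋ := lt_of_le_of_ne hle hne
  set n : ℤ := ⌊(b + s) / ρ⌋ with hn
  have h1 : a + s < n * ρ := by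
    have : (a + s) / ρ < n := lt_of_lt_of_le (Int.lt_floor_add_one _)
      (by exact_mod_cast Int.add_one_le_of_lt hlt)
    calc a + s = ((a + s) / ρ) * ρ := by field_simp
      _ < n * ρ := by gcongr
  have h2 : (n : ℝ) * ρ ≤ b + s := by
    have := Int.floor_le ((b + s) / ρ)
    calc (n : ℝ) * ρ ≤ ((b + s)/ρ) * ρ := by gcongr
      _ = b + s := by field_simp
  have hnlb : ⌊a/ρ⌋ + 1 ≤ n := by
    have : a / ρ < n := by
      rw [div_lt_iff₀ hρ]
      calc a ≤ a + s := by linarith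
        _ < n * ρ := h1
    exact Int.add_one_le_of_lt (Int.floor_lt.mpr this)
  have hnub : n ≤ ⌊a/ρ⌋ + 2 := by
    have h3 : ((n : ℝ) - 2) * ρ < a := by nlinarith
    have h4 : ((n : ℝ) - 2) ≤ a / ρ := le_of_lt ((lt_div_iff₀ hρ).mpr h3)
    have : (n : ℤ) - 2 ≤ ⌊a/ρ⌋ := Int.le_floor.mpr (by push_cast; linarith)
    omega
  have hcase : n = ⌊a/ρ⌋ + 1 ∨ n = ⌊a/ρ⌋ + 2 := by omega
  rcases hcase with h | h <;> rw [h] at h1 h2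
  · exact Or.inl ⟨by push_cast at *; linarith, by push_cast at *; linarith⟩
  · exact Or.inr ⟨by push_cast at *; linarith, by push_cast at *; linarith⟩

private lemma coord_bound_le (ρ a b : ℝ) (hρ : 0 < ρ) (hab : a ≤ b) :
    (volume[|Ico (0:ℝ) ρ]) {s : ℝ | ⌊(a + s) / ρ⌋ ≠ ⌊(b + s) / ρ⌋}
      ≤ ENNReal.ofReal (2 * (b - a) / ρ) := by
  have hIco : volume (Ico (0:ℝ) ρ) = ENNReal.ofReal ρ := by
    rw [Real.volume_Ico, sub_zero]
  rw [cond_apply measurableSet_Ico]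
  rcases le_or_gt ρ (b - a) with h | h
  · calc (volume (Ico (0:ℝ) ρ))⁻¹ * volume (Ico (0:ℝ) ρ ∩ _)
        ≤ (volume (Ico (0:ℝ) ρ))⁻¹ * volume (Ico (0:ℝ) ρ) :=
          mul_le_mul_right (measure_mono inter_subset_left) _
      _ ≤ 1 := ENNReal.inv_mul_le_one _
      _ ≤ ENNReal.ofReal (2 * (b - a) / ρ) := by
          rw [← ENNReal.ofReal_one]
          apply ENNReal.ofReal_le_ofReal
          rw [le_div_iff₀ hρ]; nlinarith
  · have hsub := floor_ne_subset ρ a b hρ hab h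
    have hvol : volume (Ico (0:ℝ) ρ ∩ {s : ℝ | ⌊(a + s) / ρ⌋ ≠ ⌊(b + s) / ρ⌋})
        ≤ ENNReal.ofReal (2 * (b - a)) := by
      rw [inter_comm]
      refine le_trans (measure_mono hsub) ?_
      refine le_trans (measure_union_le _ _) ?_
      rw [Real.volume_Ico, Real.volume_Ico]
      have : ((⌊a/ρ⌋:ℝ)+1)*ρ - a - (((⌊a/ρ⌋:ℝ)+1)*ρ - b) = b - a := by ring
      rw [this]
      have : ((⌊a/ρ⌋:ℝ)+2)*ρ - a - (((⌊a/ρ⌋:ℝ)+2)*ρ - b) = b - a := by ring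
      rw [this, ← ENNReal.ofReal_add (by linarith) (by linarith)]
      apply ENNReal.ofReal_le_ofReal; linarith
    calc (volume (Ico (0:ℝ) ρ))⁻¹ * volume (Ico (0:ℝ) ρ ∩ _)
        ≤ (ENNReal.ofReal ρ)⁻¹ * ENNReal.ofReal (2 * (b - a)) := by
          rw [hIco]; exact mul_le_mul_right hvol _
      _ = ENNReal.ofReal (2 * (b - a) / ρ) := by
          rw [ENNReal.ofReal_div_of_pos hρ, div_eq_mul_inv, mul_comm]

private lemma coord_bound (ρ a b : ℝ) (hρ : 0 < ρ) :
    (volume[|Ico (0:ℝ) ρ]) {s : ℝ | ⌊(a + s) / ρ⌋ ≠ ⌊(b + s) / ρ⌋}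
      ≤ ENNReal.ofReal (2 * |a - b| / ρ) := by
  rcases le_total a b with hab | hab
  · rw [abs_of_nonpos (by linarith), neg_sub]
    exact coord_bound_le ρ a b hρ hab
  · rw [abs_of_nonneg (by linarith)]
    have : {s : ℝ | ⌊(a + s) / ρ⌋ ≠ ⌊(b + s) / ρ⌋}
        = {s : ℝ | ⌊(b + s) / ρ⌋ ≠ ⌊(a + s) / ρ⌋} := by
      ext s; exact ne_comm
    rw [this]
    exact coord_bound_le ρ b a hρ hab

/-- a randomly shifted grid of side length `ρ` separates two points
`x, y ∈ ℝ^k` with probability at most `(2√k/ρ)·‖x − y‖₂`. The shift `s` is uniform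
on `[0, ρ)^k` (product of the uniform measure `volume[|[0,ρ)]` over coordinates). -/
theorem stmt_18 (k : ℕ) (hk : 1 ≤ k) (ρ : ℝ) (hρ : 0 < ρ)
    (x y : EuclideanSpace ℝ (Fin k)) :
    (Measure.pi fun _ : Fin k => ProbabilityTheory.cond volume (Set.Ico (0 : ℝ) ρ))
        {s | ∃ i, ⌊(x i + s i) / ρ⌋ ≠ ⌊(y i + s i) / ρ⌋}
      ≤ ENNReal.ofReal (2 * Real.sqrt k / ρ * ‖x - y‖) := by
  set μ : Measure ℝ := volume[|Ico (0:ℝ) ρ] with hμ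
  have hprob : IsProbabilityMeasure μ := by
    apply cond_isProbabilityMeasure_of_finite
    · rw [Real.volume_Ico, sub_zero]
      simp [ENNReal.ofReal_eq_zero, not_le, hρ]
    · rw [Real.volume_Ico]; exact ENNReal.ofReal_ne_top
  set B : Fin k → Set ℝ := fun i => {s : ℝ | ⌊(x i + s) / ρ⌋ ≠ ⌊(y i + s) / ρ⌋} with hB
  have hBm : ∀ i, MeasurableSet (B i) := by
    intro i
    have h1 : Measurable fun s : ℝ => ⌊(x i + s) / ρ⌋ :=
      Int.measurable_floor.comp ((measurable_const.add measurable_id).div_const ρ)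
    have h2 : Measurable fun s : ℝ => ⌊(y i + s) / ρ⌋ :=
      Int.measurable_floor.comp ((measurable_const.add measurable_id).div_const ρ)
    exact (measurableSet_eq_fun h1 h2).compl
  have hset : {s : (Fin k) → ℝ | ∃ i, ⌊(x i + s i) / ρ⌋ ≠ ⌊(y i + s i) / ρ⌋}
      = ⋃ i, Function.eval i ⁻¹' B i := by
    ext s; simp [hB, Function.eval]
  have heval : ∀ i, (Measure.pi fun _ : Fin k => μ) (Function.eval i ⁻¹' B i) = μ (B i) := by
    intro i
    classical
    rw [eval_preimage, Measure.pi_pi]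
    rw [Finset.prod_eq_single i (fun j _ hj => by
      simp [Function.update_of_ne hj]) (by simp)]
    simp
  calc (Measure.pi fun _ : Fin k => μ) {s | ∃ i, ⌊(x i + s i) / ρ⌋ ≠ ⌊(y i + s i) / ρ⌋}
      ≤ ∑' i, (Measure.pi fun _ : Fin k => μ) (Function.eval i ⁻¹' B i) := by
        rw [hset]; exact measure_iUnion_le _
    _ = ∑ i, μ (B i) := by rw [tsum_fintype]; exact Finset.sum_congr rfl fun i _ => heval i
    _ ≤ ∑ i, ENNReal.ofReal (2 * |x i - y i| / ρ) :=
        Finset.sum_le_sum fun i _ => coord_bound ρ (x i) (y i) hρ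
    _ = ENNReal.ofReal (∑ i, 2 * |x i - y i| / ρ) := by
        rw [ENNReal.ofReal_sum_of_nonneg (fun i _ => by positivity)]
    _ ≤ ENNReal.ofReal (2 * Real.sqrt k / ρ * ‖x - y‖) := by
        apply ENNReal.ofReal_le_ofReal
        have hnorm : ‖x - y‖ = Real.sqrt (∑ i, |x i - y i| ^ 2) := by
          rw [EuclideanSpace.norm_eq]
          congr 1
        have hcs : ∑ i, |x i - y i| ≤ Real.sqrt k * ‖x - y‖ := by
          rw [hnorm, ← Real.sqrt_mul (Nat.cast_nonneg k)]
          apply Real.le_sqrt_of_sq_le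
          calc (∑ i, |x i - y i|) ^ 2 ≤ (Finset.univ.card : ℝ) * ∑ i, |x i - y i| ^ 2 :=
              sq_sum_le_card_mul_sum_sq
            _ = (k : ℝ) * ∑ i, |x i - y i| ^ 2 := by simp
        calc ∑ i, 2 * |x i - y i| / ρ = (2 / ρ) * ∑ i, |x i - y i| := by
              rw [Finset.mul_sum]; apply Finset.sum_congr rfl; intro i _; ring
          _ ≤ (2 / ρ) * (Real.sqrt k * ‖x - y‖) := by
              apply mul_le_mul_of_nonneg_left hcs; positivity
          _ = 2 * Real.sqrt k / ρ * ‖x - y‖ := by ring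
end

section
/- Let n, d ≥ 1, let δ ∈ (0, 1), and let σ > 0 satisfy 1/σ ≥ 10·(d + log(n/δ)). Let a_1, …, a_n ∈ ℝ^d satisfy ‖a_i‖₂ = 1 for all i ∈ [n], and let g_1, …, g_n be independent random vectors in ℝ^d, each with independent Gaussian coordinates of mean 0 and variance σ² (i.e., the collection (g_i)_{i∈[n]} is distributed according to the product over [n]×[d] of the Gaussian measure N(0, σ²) on ℝ). Then with probability at least 1 − δ, every i ∈ [n] satisfies 1/6 ≤ ‖a_i + g_i‖₂² ≤ 2. -/
open MeasureTheory ProbabilityTheory Real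
open scoped NNReal ENNReal

lemma aux_pdf_shift (v : ℝ≥0) (hv : 0 < (v:ℝ)) (t x : ℝ) :
    gaussianPDFReal 0 v x * Real.exp (t * x)
      = Real.exp (v * t ^ 2 / 2) * gaussianPDFReal (t * v) v x := by
  unfold gaussianPDFReal
  have h : -(x - 0)^2/(2*(v:ℝ)) + t*x = (v:ℝ)*t^2/2 + (-(x - t*v)^2/(2*(v:ℝ))) := by
    field_simp; ring
  rw [mul_assoc, ← Real.exp_add, h, Real.exp_add]
  ring

lemma aux_integrable_exp (v : ℝ≥0) (hv : v ≠ 0) (t : ℝ) :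
    Integrable (fun x => Real.exp (t * x)) (gaussianReal 0 v) := by
  have hv0 : (0:ℝ) < v := NNReal.coe_pos.mpr ((show (0:ℝ≥0) ≤ v from zero_le).lt_of_ne (Ne.symm hv))
  rw [gaussianReal_of_var_ne_zero 0 hv]
  have hmeq : gaussianPDF 0 v
      = fun x => ((Real.toNNReal (gaussianPDFReal 0 v x) : ℝ≥0) : ℝ≥0∞) := rfl
  rw [hmeq, integrable_withDensity_iff_integrable_smul
    ((measurable_gaussianPDFReal 0 v).real_toNNReal)]
  have heq : (fun x => (Real.toNNReal (gaussianPDFReal 0 v x)) • Real.exp (t * x))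
      = fun x => Real.exp ((v:ℝ) * t ^ 2 / 2) * gaussianPDFReal (t * v) v x := by
    funext x
    rw [NNReal.smul_def, smul_eq_mul, Real.coe_toNNReal _ (gaussianPDFReal_nonneg _ _ _),
      aux_pdf_shift v hv0 t x]
  rw [heq]
  exact (integrable_gaussianPDFReal _ _).const_mul _

lemma aux_integral_exp (v : ℝ≥0) (hv : v ≠ 0) (t : ℝ) :
    ∫ x, Real.exp (t * x) ∂(gaussianReal 0 v) = Real.exp ((v:ℝ) * t ^ 2 / 2) := by
  have hv0 : (0:ℝ) < v := NNReal.coe_pos.mpr ((show (0:ℝ≥0) ≤ v from zero_le).lt_of_ne (Ne.symm hv))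
  rw [gaussianReal_of_var_ne_zero 0 hv]
  have hmeq : gaussianPDF 0 v
      = fun x => ((Real.toNNReal (gaussianPDFReal 0 v x) : ℝ≥0) : ℝ≥0∞) := rfl
  rw [hmeq, integral_withDensity_eq_integral_smul
    ((measurable_gaussianPDFReal 0 v).real_toNNReal)]
  have heq : (fun x => (Real.toNNReal (gaussianPDFReal 0 v x)) • Real.exp (t * x))
      = fun x => Real.exp ((v:ℝ) * t ^ 2 / 2) * gaussianPDFReal (t * v) v x := by
    funext x
    rw [NNReal.smul_def, smul_eq_mul, Real.coe_toNNReal _ (gaussianPDFReal_nonneg _ _ _),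
      aux_pdf_shift v hv0 t x]
  rw [heq, integral_const_mul, integral_gaussianPDFReal_eq_one _ hv, mul_one]


lemma aux_mgf_exp (v : ℝ≥0) (hv : v ≠ 0) (t : ℝ) :
    mgf (fun x : ℝ => x) (gaussianReal 0 v) t = Real.exp ((v:ℝ) * t ^ 2 / 2) := by
  rw [mgf]
  exact aux_integral_exp v hv t

lemma aux_tail_ge (v : ℝ≥0) (hv : v ≠ 0) (ε : ℝ) (hε : 0 < ε) :
    (gaussianReal 0 v {x | ε ≤ x}).toReal ≤ Real.exp (-ε ^ 2 / (2 * (v:ℝ))) := by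
  have hv0 : (0:ℝ) < v := NNReal.coe_pos.mpr ((show (0:ℝ≥0) ≤ v from zero_le).lt_of_ne (Ne.symm hv))
  have ht : 0 ≤ ε / (v:ℝ) := by positivity
  have h := measure_ge_le_exp_mul_mgf (X := fun x : ℝ => x) (μ := gaussianReal 0 v)
    ε ht (aux_integrable_exp v hv _)
  rw [aux_mgf_exp v hv, ← Real.exp_add] at h
  refine h.trans (le_of_eq ?_)
  congr 1
  field_simp
  ring

lemma aux_tail_le (v : ℝ≥0) (hv : v ≠ 0) (ε : ℝ) (hε : 0 < ε) :
    (gaussianReal 0 v {x | x ≤ -ε}).toReal ≤ Real.exp (-ε ^ 2 / (2 * (v:ℝ))) := by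
  have hv0 : (0:ℝ) < v := NNReal.coe_pos.mpr ((show (0:ℝ≥0) ≤ v from zero_le).lt_of_ne (Ne.symm hv))
  have ht : -(ε / (v:ℝ)) ≤ 0 := neg_nonpos.mpr (by positivity)
  have h := measure_le_le_exp_mul_mgf (X := fun x : ℝ => x) (μ := gaussianReal 0 v)
    (-ε) ht (aux_integrable_exp v hv _)
  rw [aux_mgf_exp v hv, ← Real.exp_add] at h
  refine h.trans (le_of_eq ?_)
  congr 1
  field_simp
  ring

lemma aux_tail_both (v : ℝ≥0) (hv : v ≠ 0) (ε : ℝ) (hε : 0 < ε) :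
    (gaussianReal 0 v (Set.Icc (-ε) ε)ᶜ).toReal ≤ 2 * Real.exp (-ε ^ 2 / (2 * (v:ℝ))) := by
  have hsub : (Set.Icc (-ε) ε)ᶜ ⊆ {x : ℝ | x ≤ -ε} ∪ {x | ε ≤ x} := by
    intro x hx
    simp only [Set.mem_compl_iff, Set.mem_Icc, not_and_or, not_le] at hx
    rcases hx with h | h
    · exact Or.inl h.le
    · exact Or.inr h.le
  calc (gaussianReal 0 v (Set.Icc (-ε) ε)ᶜ).toReal
      ≤ ((gaussianReal 0 v) {x : ℝ | x ≤ -ε} + (gaussianReal 0 v) {x | ε ≤ x}).toReal := by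
        refine ENNReal.toReal_mono ?_ ((measure_mono hsub).trans (measure_union_le _ _))
        exact ENNReal.add_ne_top.mpr ⟨measure_ne_top _ _, measure_ne_top _ _⟩
    _ = (gaussianReal 0 v {x : ℝ | x ≤ -ε}).toReal + (gaussianReal 0 v {x | ε ≤ x}).toReal :=
        ENNReal.toReal_add (measure_ne_top _ _) (measure_ne_top _ _)
    _ ≤ 2 * Real.exp (-ε ^ 2 / (2 * (v:ℝ))) := by
        have h1 := aux_tail_le v hv ε hε
        have h2 := aux_tail_ge v hv ε hε
        linarith




lemma aux_num (D L s : ℝ) (hD : 1 ≤ D) (hL : 0 ≤ L) (hs : 0 < s)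
    (h : s * (10 * (D + L)) ≤ 1) (G : ℝ) (hG : G ≤ 2 * D - 1 + L) :
    G ≤ 1 / (18 * D * s ^ 2) := by
  have hpos : (0:ℝ) < 18 * D * s ^ 2 := by positivity
  rw [le_div_iff₀ hpos]
  have h1 : 100 * (D + L) ^ 2 * s ^ 2 ≤ 1 := by
    nlinarith [mul_nonneg hs.le (by positivity : (0:ℝ) ≤ 10 * (D + L))]
  have h2 : 18 * D * (2 * D - 1 + L) ≤ 100 * (D + L) ^ 2 := by nlinarith
  have h3 : G * (18 * D * s ^ 2) ≤ (2 * D - 1 + L) * (18 * D * s ^ 2) :=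
    mul_le_mul_of_nonneg_right hG hpos.le
  have h4 : (2 * D - 1 + L) * (18 * D * s ^ 2) ≤ 100 * (D + L) ^ 2 * s ^ 2 := by
    have := mul_le_mul_of_nonneg_right h2 (sq_nonneg s)
    nlinarith [this]
  linarith

set_option maxHeartbeats 1000000 in
/-- norms of smoothed unit vectors. If `a_1, …, a_n` are unit vectors
in `ℝ^d` and `g_1, …, g_n` have i.i.d. `N(0, σ²)` coordinates (product measure over
`[n] × [d]`) with `1/σ ≥ 10(d + log(n/δ))`, then with probability at least `1 − δ`,
`1/6 ≤ ‖a_i + g_i‖₂² ≤ 2` for every `i`. -/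
theorem stmt_19 (n d : ℕ) (hn : 1 ≤ n) (hd : 1 ≤ d)
    (δ : ℝ) (hδ0 : 0 < δ) (hδ1 : δ < 1)
    (σ : ℝ) (hσ : 0 < σ) (hσ' : 10 * (d + Real.log (n / δ)) ≤ 1 / σ)
    (a : Fin n → EuclideanSpace ℝ (Fin d)) (ha : ∀ i, ‖a i‖ = 1) :
    ENNReal.ofReal (1 - δ) ≤
      (Measure.pi fun _ : Fin n => Measure.pi fun _ : Fin d =>
          gaussianReal 0 ⟨σ ^ 2, sq_nonneg σ⟩)
        {ω | ∀ i, 1 / 6 ≤ ∑ j, (a i j + ω i j) ^ 2 ∧ ∑ j, (a i j + ω i j) ^ 2 ≤ 2} := by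
  have hd1 : (1:ℝ) ≤ d := by exact_mod_cast hd
  have hn1 : (1:ℝ) ≤ n := by exact_mod_cast hn
  set v : ℝ≥0 := ⟨σ ^ 2, sq_nonneg σ⟩ with hv_def
  have hv_eq : (v:ℝ) = σ ^ 2 := rfl
  have hv : v ≠ 0 := by
    intro h
    have : (v:ℝ) = 0 := by rw [h]; simp
    rw [hv_eq] at this
    nlinarith
  set ε : ℝ := 1 / (3 * Real.sqrt d) with hε_def
  have hsqrt : (0:ℝ) < Real.sqrt d := Real.sqrt_pos.mpr (by linarith)
  have hε : 0 < ε := by positivity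
  have hε2 : ε ^ 2 = 1 / (9 * d) := by
    rw [hε_def, div_pow, mul_pow, Real.sq_sqrt (by linarith : (0:ℝ) ≤ (d:ℝ))]
    norm_num
  set μ1 : Measure ℝ := gaussianReal 0 v with hμ1
  -- event inclusion
  have hsub : (Set.pi Set.univ fun _ : Fin n => Set.pi Set.univ fun _ : Fin d => Set.Icc (-ε) ε)
      ⊆ {ω : Fin n → Fin d → ℝ |
          ∀ i, 1 / 6 ≤ ∑ j, (a i j + ω i j) ^ 2 ∧ ∑ j, (a i j + ω i j) ^ 2 ≤ 2} := by
    intro ω hω i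
    simp only [Set.mem_pi, Set.mem_univ, forall_true_left, Set.mem_Icc] at hω
    have ha2 : ∑ j, (a i j) ^ 2 = 1 := by
      have h := ha i
      rw [EuclideanSpace.norm_eq] at h
      have h9 : ∑ j, ‖a i j‖ ^ 2 = 1 := by
        have h0 : 0 ≤ ∑ j, ‖a i j‖ ^ 2 := Finset.sum_nonneg fun j _ => sq_nonneg _
        nlinarith [Real.sq_sqrt h0, h]
      simpa [Real.norm_eq_abs, sq_abs] using h9
    have hg2 : ∑ j, (ω i j) ^ 2 ≤ 1 / 9 := by
      calc ∑ j, (ω i j) ^ 2 ≤ ∑ _j : Fin d, ε ^ 2 :=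
            Finset.sum_le_sum fun j _ => sq_le_sq' (hω i j).1 (hω i j).2
        _ = d * ε ^ 2 := by simp [Finset.sum_const, mul_comm]
        _ ≤ 1 / 9 := by
            rw [hε2]
            rw [mul_one_div, div_le_div_iff₀ (by linarith) (by norm_num)]
            linarith
    have hg0 : 0 ≤ ∑ j, (ω i j) ^ 2 := Finset.sum_nonneg fun j _ => sq_nonneg _
    have hcs : (∑ j, a i j * ω i j) ^ 2 ≤ 1 / 9 := by
      calc (∑ j, a i j * ω i j) ^ 2 ≤ (∑ j, (a i j) ^ 2) * ∑ j, (ω i j) ^ 2 :=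
            Finset.sum_mul_sq_le_sq_mul_sq _ _ _
        _ ≤ 1 / 9 := by rw [ha2, one_mul]; exact hg2
    have hexp : ∑ j, (a i j + ω i j) ^ 2
        = 1 + 2 * (∑ j, a i j * ω i j) + ∑ j, (ω i j) ^ 2 := by
      rw [← ha2, Finset.mul_sum, ← Finset.sum_add_distrib, ← Finset.sum_add_distrib]
      exact Finset.sum_congr rfl fun j _ => by ring
    have hT1 : -(1/3) ≤ ∑ j, a i j * ω i j := by nlinarith [hcs]
    have hT2 : (∑ j, a i j * ω i j) ≤ 1/3 := by nlinarith [hcs]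
    constructor
    · rw [hexp]; linarith
    · rw [hexp]; linarith
  refine le_trans ?_ (measure_mono hsub)
  rw [Measure.pi_pi]
  have hi : ∀ _i : Fin n, (Measure.pi fun _ : Fin d => μ1)
      (Set.pi Set.univ fun _ => Set.Icc (-ε) ε) = (μ1 (Set.Icc (-ε) ε)) ^ d := by
    intro i
    rw [Measure.pi_pi]
    simp [Finset.prod_const]
  rw [Finset.prod_congr rfl fun i _ => hi i, Finset.prod_const]
  simp only [Finset.card_univ, Fintype.card_fin, ← pow_mul]
  -- now : ofReal (1-δ) ≤ μ1 (Icc) ^ (d * n)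
  have hptop : μ1 (Set.Icc (-ε) ε) ≠ ⊤ := measure_ne_top _ _
  set p : ℝ := (μ1 (Set.Icc (-ε) ε)).toReal with hp_def
  set q : ℝ := (μ1 (Set.Icc (-ε) ε)ᶜ).toReal with hq_def
  have hpq : p + q = 1 := by
    rw [hp_def, hq_def, ← ENNReal.toReal_add (measure_ne_top _ _) (measure_ne_top _ _),
      measure_add_measure_compl measurableSet_Icc, measure_univ, ENNReal.toReal_one]
  have hq0 : 0 ≤ q := ENNReal.toReal_nonneg
  have hp0 : 0 ≤ p := ENNReal.toReal_nonneg
  -- numeric bound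
  set L := Real.log (↑n / δ) with hL_def
  have hLnonneg : 0 ≤ L := Real.log_nonneg (by rw [le_div_iff₀ hδ0]; linarith)
  have hσle : σ * (10 * ((d:ℝ) + L)) ≤ 1 := by
    have h := mul_le_mul_of_nonneg_left hσ' hσ.le
    calc σ * (10 * ((d:ℝ) + L)) ≤ σ * (1 / σ) := h
      _ = 1 := by field_simp
  have hq_tail : q ≤ 2 * Real.exp (-ε ^ 2 / (2 * (v:ℝ))) := aux_tail_both v hv ε hε
  have hexp_eq : -ε ^ 2 / (2 * (v:ℝ)) = -(1 / (18 * d * σ ^ 2)) := by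
    rw [hv_eq, hε2]
    field_simp
    ring
  have hlogle : Real.log (2 * n * d / δ) ≤ 1 / (18 * (d:ℝ) * σ ^ 2) := by
    refine aux_num (d:ℝ) L σ hd1 hLnonneg hσ hσle _ ?_
    have h1 : Real.log (2 * (n:ℝ) * d / δ) = Real.log (2 * d) + L := by
      rw [hL_def, show (2 * (n:ℝ) * d / δ : ℝ) = (2 * d) * ((n:ℝ) / δ) by field_simp,
        Real.log_mul (by positivity) (by positivity)]
    have h2 : Real.log (2 * (d:ℝ)) ≤ 2 * d - 1 := by
      have := Real.log_le_sub_one_of_pos (show (0:ℝ) < 2 * d by positivity)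
      linarith
    rw [h1]
    linarith
  have hexp2 : Real.exp (-(1 / (18 * (d:ℝ) * σ ^ 2))) ≤ δ / (2 * n * d) := by
    rw [show δ / (2 * (n:ℝ) * d) = Real.exp (Real.log (δ / (2 * n * d))) from
      (Real.exp_log (by positivity)).symm]
    apply Real.exp_le_exp.mpr
    have hinv : Real.log (δ / (2 * (n:ℝ) * d)) = -Real.log (2 * n * d / δ) := by
      rw [← Real.log_inv]
      congr 1
      field_simp
    rw [hinv]
    linarith
  have key : ((d * n : ℕ) : ℝ) * q ≤ δ := by
    have hc : ((d * n : ℕ) : ℝ) = (d:ℝ) * n := by push_cast; ring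
    rw [hc]
    calc (d:ℝ) * n * q ≤ (d:ℝ) * n * (2 * Real.exp (-(1 / (18 * d * σ ^ 2)))) := by
          rw [← hexp_eq]
          have hnn : (0:ℝ) ≤ (d:ℝ) * n := by positivity
          exact mul_le_mul_of_nonneg_left hq_tail hnn
      _ ≤ (d:ℝ) * n * (2 * (δ / (2 * n * d))) := by
          have hnn : (0:ℝ) ≤ (d:ℝ) * n := by positivity
          exact mul_le_mul_of_nonneg_left (by linarith [hexp2]) hnn
      _ = δ := by field_simp
  have hq1 : q ≤ 1 := by linarith
  have hbern : 1 - δ ≤ p ^ (d * n) := by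
    have hb := one_add_mul_le_pow (a := -q) (by linarith) (d * n)
    have hb' : 1 - ((d * n : ℕ) : ℝ) * q ≤ (1 - q) ^ (d * n) := by
      simpa [sub_eq_add_neg, mul_neg] using hb
    have hp1q : p = 1 - q := by linarith
    rw [hp1q]
    linarith
  calc ENNReal.ofReal (1 - δ) ≤ ENNReal.ofReal (p ^ (d * n)) :=
        ENNReal.ofReal_le_ofReal hbern
    _ = (ENNReal.ofReal p) ^ (d * n) := ENNReal.ofReal_pow hp0 _
    _ = μ1 (Set.Icc (-ε) ε) ^ (d * n) := by rw [hp_def, ENNReal.ofReal_toReal hptop]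
end
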